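/- arXiv:math/0412435 — 5 statements merged into one kernel-verified Lean document; each statement's English description precedes it below -/
import Mathlib

section
/- Let G be an l-group, n ≥ 0 a natural number, and equip C_c^∞(G^{n+1}) with the smooth G-action by diagonal right translations, (R_g f)(g₀,…,g_n) = f(g₀g,…,g_n g). Then C_c^∞(G^{n+1}) is projective in the category of smooth G-modules: for every surjective morphism of smooth G-modules P: U → V and every morphism of smooth G-modules F: C_c^∞(G^{n+1}) → V, there exists a morphism of smooth G-modules F̄: C_c^∞(G^{n+1}) → U with P ∘ F̄ = F. -/
open MeasureTheory
open scoped Pointwise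

noncomputable section

/-- The space of locally constant, compactly supported `V`-valued functions on `X`,
as a `ℂ`-submodule of `X → V`.  This is `C_c^∞(X, V)`. -/
def SmCc (X : Type*) [TopologicalSpace X] (V : Type*) [AddCommGroup V] [Module ℂ V] :
    Submodule ℂ (X → V) where
  carrier := {f | IsLocallyConstant f ∧ HasCompactSupport f}
  add_mem' := fun hf hg => ⟨hf.1.add hg.1, hf.2.add hg.2⟩
  zero_mem' := ⟨IsLocallyConstant.const 0, by
    have : Function.support (0 : X → V) = ∅ := Function.support_zero
    simp [HasCompactSupport, tsupport, this]⟩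
  smul_mem' := fun c f hf => ⟨hf.1.comp (fun v => c • v), hf.2.mono
    (Function.support_const_smul_subset c f)⟩

/-- The integral of a locally constant compactly supported function against a measure:
the finite sum `∑ᵥ μ(f⁻¹{v}) • v` over the (finitely many) nonzero values of `f`. -/
def smInt {X : Type*} [MeasurableSpace X] (μ : Measure X)
    {V : Type*} [AddCommGroup V] [Module ℂ V] (f : X → V) : V :=
  ∑ᶠ v : V, (((μ (f ⁻¹' {v})).toReal : ℝ) : ℂ) • v

/-- A representation of `G` on a complex vector space is *smooth* if every vector is fixed
by some open subgroup. -/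
def SmoothRep {G : Type*} [Group G] [TopologicalSpace G] {V : Type*} [AddCommGroup V]
    [Module ℂ V] (ρ : Representation ℂ G V) : Prop :=
  ∀ v : V, ∃ U : Subgroup G, IsOpen (U : Set G) ∧ ∀ g ∈ U, ρ g v = v

/-- `G` admits a neighbourhood basis of the identity consisting of compact open subgroups
(part of the definition of an `l`-group). -/
def HasCompactOpenBasis (G : Type*) [Group G] [TopologicalSpace G] : Prop :=
  ∀ U ∈ nhds (1 : G), ∃ K : Subgroup G, IsCompact (K : Set G) ∧ IsOpen (K : Set G) ∧
    (K : Set G) ⊆ U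

/-- Pullback along a homeomorphism combined with postcomposition by a linear map, as a linear
map between spaces of locally constant compactly supported functions. -/
def ccMap {X Y : Type*} [TopologicalSpace X] [TopologicalSpace Y]
    {V W : Type*} [AddCommGroup V] [Module ℂ V] [AddCommGroup W] [Module ℂ W]
    (φ : X ≃ₜ Y) (T : V →ₗ[ℂ] W) : SmCc Y V →ₗ[ℂ] SmCc X W where
  toFun f := ⟨fun x => T (f.1 (φ x)),
    ⟨(f.2.1.comp_continuous φ.continuous).comp T, (f.2.2.comp_homeomorph φ).comp_left T.map_zero⟩⟩
  map_add' f g := by ext x; simp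
  map_smul' c f := by ext x; simp

/-- Diagonal right translation `(R_g f)(g₀,…,g_n) = f(g₀g,…,g_ng)` on
`C_c^∞(G^{n+1})`, as a linear map. -/
def rightDiag (G : Type*) [Group G] [TopologicalSpace G] [IsTopologicalGroup G] (n : ℕ) (g : G) :
    SmCc (Fin (n + 1) → G) ℂ →ₗ[ℂ] SmCc (Fin (n + 1) → G) ℂ :=
  ccMap (Homeomorph.piCongrRight fun _ : Fin (n + 1) => Homeomorph.mulRight g) LinearMap.id


/-! ### Auxiliary lemmas -/

section IntegrationAux

open Function Set

theorem smInt_eq_sum {α : Type*} {W : Type*} [AddCommGroup W] [Module ℂ W]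
    [MeasurableSpace α] (μ : Measure α) {ι : Type*} (s : Finset ι)
    (A : ι → Set α) (c : ι → W)
    (hmeas : ∀ i ∈ s, MeasurableSet (A i))
    (hfin : ∀ i ∈ s, μ (A i) ≠ ⊤)
    (hdisj : (s : Set ι).PairwiseDisjoint A)
    (I : α → W) (hI : ∀ g, I g = ∑ i ∈ s, (A i).indicator (fun _ => c i) g) :
    smInt μ I = ∑ i ∈ s, (((μ (A i)).toReal : ℝ) : ℂ) • c i := by
  classical
  set s' := s.filter (fun i => c i ≠ 0) with hs'
  have hsub : s' ⊆ s := Finset.filter_subset _ _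
  have hI' : ∀ g, I g = ∑ i ∈ s', (A i).indicator (fun _ => c i) g := by
    intro g
    rw [hI g]
    refine (Finset.sum_filter_of_ne ?_).symm
    intro i hi h hc
    apply h
    simp [hc]
  have key : ∀ g (i : ι), i ∈ s' → g ∈ A i → I g = c i := by
    intro g i hi hgA
    rw [hI' g, Finset.sum_eq_single_of_mem i hi (fun j hj hne =>
        Set.indicator_of_notMem
          (fun hgAj => (Set.disjoint_left.mp (hdisj (hsub hj) (hsub hi) hne) hgAj) hgA) _),
      Set.indicator_of_mem hgA]
  have hfiber : ∀ v : W, v ≠ 0 →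
      I ⁻¹' {v} = ⋃ i ∈ (s'.filter fun i => c i = v), A i := by
    intro v hv
    ext g
    simp only [mem_preimage, mem_singleton_iff, mem_iUnion, exists_prop,
      Finset.mem_filter]
    constructor
    · intro h
      by_cases hex : ∃ i ∈ s', g ∈ A i
      · obtain ⟨i, hi, hgA⟩ := hex
        exact ⟨i, ⟨hi, by rw [← key g i hi hgA, h]⟩, hgA⟩
      · exfalso
        apply hv
        rw [← h, hI' g]
        apply Finset.sum_eq_zero
        intro i hi
        exact Set.indicator_of_notMem (fun hgA => hex ⟨i, hi, hgA⟩) _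
    · rintro ⟨i, ⟨hi, hci⟩, hgA⟩
      rw [key g i hi hgA, hci]
  have hsupp : (Function.support fun v : W => (((μ (I ⁻¹' {v})).toReal : ℝ) : ℂ) • v)
      ⊆ ↑(s'.image c) := by
    intro v hv
    simp only [Function.mem_support] at hv
    by_contra hvn
    rcases eq_or_ne v 0 with rfl | hv0
    · exact hv (smul_zero _)
    apply hv
    have : (s'.filter fun i => c i = v) = ∅ := by
      rw [Finset.filter_eq_empty_iff]
      intro i hi hci
      exact hvn (Finset.mem_coe.mpr (Finset.mem_image.mpr ⟨i, hi, hci⟩))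
    rw [hfiber v hv0, this]
    simp
  rw [smInt, finsum_eq_sum_of_support_subset _ hsupp]
  have step : ∀ v ∈ s'.image c,
      (((μ (I ⁻¹' {v})).toReal : ℝ) : ℂ) • v
        = ∑ i ∈ s'.filter (fun i => c i = v), (((μ (A i)).toReal : ℝ) : ℂ) • c i := by
    intro v hv
    obtain ⟨i₀, hi₀, hci₀⟩ := Finset.mem_image.mp hv
    have hv0 : v ≠ 0 := hci₀ ▸ (Finset.mem_filter.mp hi₀).2
    rw [hfiber v hv0, measure_biUnion_finset
        (hdisj.subset (by intro j hj; exact hsub ((Finset.filter_subset _ _) hj)))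
        (fun j hj => hmeas j (hsub ((Finset.filter_subset _ _) hj)))]
    rw [ENNReal.toReal_sum (fun j hj => hfin j (hsub ((Finset.filter_subset _ _) hj)))]
    push_cast
    rw [Finset.sum_smul]
    apply Finset.sum_congr rfl
    intro j hj
    rw [(Finset.mem_filter.mp hj).2]
  rw [Finset.sum_congr rfl step, Finset.sum_fiberwise_of_maps_to
    (fun i hi => Finset.mem_image_of_mem c hi)]
  refine Finset.sum_filter_of_ne ?_
  intro i hi h hc
  apply h
  simp [hc]

/-- Partition of a locally constant compactly supported function subordinate to a
compact open set `S` containing its support. -/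
theorem exists_partition {α W : Type*} [TopologicalSpace α] [T2Space α] [AddCommMonoid W]
    {I : α → W} (h1 : IsLocallyConstant I) (h2 : HasCompactSupport I)
    {S : Set α} (hSc : IsCompact S) (hSo : IsOpen S) (hsub : tsupport I ⊆ S) :
    ∃ s : Finset W,
      (∀ v ∈ s, IsCompact (I ⁻¹' {v} ∩ S) ∧ IsOpen (I ⁻¹' {v} ∩ S)) ∧
      ((s : Set W).PairwiseDisjoint fun v => I ⁻¹' {v} ∩ S) ∧
      (∀ g ∈ S, I g ∈ s) ∧
      (∀ g, I g = ∑ v ∈ s, (I ⁻¹' {v} ∩ S).indicator (fun _ => v) g) := by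
  classical
  have hfin : (I '' S).Finite := by
    have : CompactSpace S := isCompact_iff_compactSpace.mp hSc
    have hrf := (h1.comp_continuous continuous_subtype_val :
      IsLocallyConstant fun x : S => I x).range_finite
    rw [Set.image_eq_range]
    exact hrf
  refine ⟨hfin.toFinset, ?_, ?_,
    fun g hg => Set.Finite.mem_toFinset _ |>.mpr ⟨g, hg, rfl⟩, ?_⟩
  · intro v _
    have hcl : IsClosed (I ⁻¹' {v}) := by
      rw [← isOpen_compl_iff, ← Set.preimage_compl]
      exact h1 _
    exact ⟨hSc.inter_left hcl, (h1 _).inter hSo⟩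
  · intro v _ w _ hne
    refine Set.disjoint_left.mpr ?_
    rintro x ⟨hxv, -⟩ ⟨hxw, -⟩
    exact hne (by rw [← Set.mem_singleton_iff.mp hxv, ← Set.mem_singleton_iff.mp hxw])
  · intro g
    by_cases hg : g ∈ S
    · have hvmem : I g ∈ hfin.toFinset := by
        rw [Set.Finite.mem_toFinset]
        exact ⟨g, hg, rfl⟩
      rw [Finset.sum_eq_single_of_mem (I g) hvmem (fun v _ hne =>
          Set.indicator_of_notMem (fun hgv =>
            hne (by rw [← Set.mem_singleton_iff.mp hgv.1])) _),
        Set.indicator_of_mem (show g ∈ I ⁻¹' {I g} ∩ S from ⟨rfl, hg⟩) _]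
    · rw [image_eq_zero_of_notMem_tsupport (fun h => hg (hsub h))]
      symm
      apply Finset.sum_eq_zero
      intro v _
      exact Set.indicator_of_notMem (fun hgv => hg hgv.2) _

theorem smInt_comp_linear {α : Type*} [TopologicalSpace α] [T2Space α] [MeasurableSpace α]
    [OpensMeasurableSpace α] (μ : Measure α) [IsFiniteMeasureOnCompacts μ]
    {W W' : Type*} [AddCommGroup W] [Module ℂ W] [AddCommGroup W'] [Module ℂ W']
    (T : W →ₗ[ℂ] W') {I : α → W} (h1 : IsLocallyConstant I) (h2 : HasCompactSupport I)
    {S : Set α} (hSc : IsCompact S) (hSo : IsOpen S) (hsub : tsupport I ⊆ S) :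
    smInt μ (fun g => T (I g)) = T (smInt μ I) := by
  classical
  obtain ⟨s, hco, hdisj, -, hrep⟩ := exists_partition h1 h2 hSc hSo hsub
  have hmeas : ∀ v ∈ s, MeasurableSet (I ⁻¹' {v} ∩ S) :=
    fun v hv => ((hco v hv).2).measurableSet
  have hfin : ∀ v ∈ s, μ (I ⁻¹' {v} ∩ S) ≠ ⊤ :=
    fun v hv => ((hco v hv).1.measure_lt_top).ne
  rw [smInt_eq_sum μ s _ _ hmeas hfin hdisj I hrep,
    smInt_eq_sum μ s _ (fun v => T v) hmeas hfin hdisj _ (fun g => by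
      rw [hrep g, map_sum]
      exact Finset.sum_congr rfl fun v _ => by
        by_cases hgv : g ∈ I ⁻¹' {v} ∩ S
        · rw [Set.indicator_of_mem hgv, Set.indicator_of_mem hgv]
        · rw [Set.indicator_of_notMem hgv, Set.indicator_of_notMem hgv, map_zero]),
    map_sum]
  exact Finset.sum_congr rfl fun v _ => (map_smul T _ _).symm

theorem smInt_add {α : Type*} [TopologicalSpace α] [T2Space α] [MeasurableSpace α]
    [OpensMeasurableSpace α] (μ : Measure α) [IsFiniteMeasureOnCompacts μ]
    {W : Type*} [AddCommGroup W] [Module ℂ W]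
    {I₁ I₂ : α → W} (h11 : IsLocallyConstant I₁) (h12 : HasCompactSupport I₁)
    (h21 : IsLocallyConstant I₂) (h22 : HasCompactSupport I₂)
    {S : Set α} (hSc : IsCompact S) (hSo : IsOpen S)
    (hsub₁ : tsupport I₁ ⊆ S) (hsub₂ : tsupport I₂ ⊆ S) :
    smInt μ (fun g => I₁ g + I₂ g) = smInt μ I₁ + smInt μ I₂ := by
  classical
  obtain ⟨s₁, hco₁, -, hs₁, -⟩ := exists_partition h11 h12 hSc hSo hsub₁
  obtain ⟨s₂, hco₂, -, hs₂, -⟩ := exists_partition h21 h22 hSc hSo hsub₂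
  set A : W × W → Set α := fun p => (I₁ ⁻¹' {p.1} ∩ S) ∩ (I₂ ⁻¹' {p.2} ∩ S) with hA
  have hmem : ∀ g ∈ S, (I₁ g, I₂ g) ∈ s₁ ×ˢ s₂ :=
    fun g hg => Finset.mem_product.mpr ⟨hs₁ g hg, hs₂ g hg⟩
  have hdisj : ((s₁ ×ˢ s₂ : Finset (W × W)) : Set (W × W)).PairwiseDisjoint A := by
    intro p _ q _ hne
    refine Set.disjoint_left.mpr ?_
    rintro x ⟨⟨hx1, -⟩, ⟨hx2, -⟩⟩ ⟨⟨hy1, -⟩, ⟨hy2, -⟩⟩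
    refine hne (Prod.ext ?_ ?_)
    · rw [← Set.mem_singleton_iff.mp hx1, ← Set.mem_singleton_iff.mp hy1]
    · rw [← Set.mem_singleton_iff.mp hx2, ← Set.mem_singleton_iff.mp hy2]
  have hmeas : ∀ p ∈ s₁ ×ˢ s₂, MeasurableSet (A p) := by
    intro p hp
    obtain ⟨hp1, hp2⟩ := Finset.mem_product.mp hp
    exact (((hco₁ _ hp1).2).inter ((hco₂ _ hp2).2)).measurableSet
  have hfinm : ∀ p ∈ s₁ ×ˢ s₂, μ (A p) ≠ ⊤ := by
    intro p hp
    refine (lt_of_le_of_lt (measure_mono ?_) hSc.measure_lt_top).ne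
    rintro x ⟨⟨-, hxS⟩, -⟩
    exact hxS
  have rep : ∀ (c : W × W → W) (I : α → W), (∀ g ∈ S, I g = c (I₁ g, I₂ g)) →
      (∀ g, g ∉ S → I g = 0) →
      smInt μ I = ∑ p ∈ s₁ ×ˢ s₂, (((μ (A p)).toReal : ℝ) : ℂ) • c p := by
    intro c I hIin hIout
    refine smInt_eq_sum μ _ A c hmeas hfinm hdisj I fun g => ?_
    by_cases hg : g ∈ S
    · rw [hIin g hg, Finset.sum_eq_single_of_mem (I₁ g, I₂ g) (hmem g hg) (fun q _ hne =>
          Set.indicator_of_notMem (fun hq =>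
            hne (Prod.ext (Set.mem_singleton_iff.mp hq.1.1).symm
              (Set.mem_singleton_iff.mp hq.2.1).symm)) _),
        Set.indicator_of_mem (show g ∈ A (I₁ g, I₂ g) from ⟨⟨rfl, hg⟩, ⟨rfl, hg⟩⟩) _]
    · rw [hIout g hg]
      symm
      apply Finset.sum_eq_zero
      intro p _
      exact Set.indicator_of_notMem (fun hgp => hg hgp.1.2) _
  rw [rep (fun p => p.1 + p.2) (fun g => I₁ g + I₂ g)
      (fun g _ => rfl)
      (fun g hg => by
        show I₁ g + I₂ g = 0
        rw [image_eq_zero_of_notMem_tsupport (fun h => hg (hsub₁ h)),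
          image_eq_zero_of_notMem_tsupport (fun h => hg (hsub₂ h)), add_zero]),
    rep (fun p => p.1) I₁ (fun g _ => rfl)
      (fun g hg => image_eq_zero_of_notMem_tsupport (fun h => hg (hsub₁ h))),
    rep (fun p => p.2) I₂ (fun g _ => rfl)
      (fun g hg => image_eq_zero_of_notMem_tsupport (fun h => hg (hsub₂ h))),
    ← Finset.sum_add_distrib]
  exact Finset.sum_congr rfl fun p _ => smul_add _ _ _

theorem smInt_comp_mul_left {G : Type*} [Group G] [MeasurableSpace G] [MeasurableMul G]
    (μ : Measure G) [μ.IsMulLeftInvariant]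
    {W : Type*} [AddCommGroup W] [Module ℂ W] (h : G) (I : G → W) :
    smInt μ (fun g => I (h * g)) = smInt μ I := by
  unfold smInt
  apply finsum_congr
  intro v
  have : (fun g => I (h * g)) ⁻¹' {v} = (fun g => h * g) ⁻¹' (I ⁻¹' {v}) := rfl
  rw [this, measure_preimage_mul]

end IntegrationAux

section TopAux

theorem IsLocallyConstant.indicator_clopen {X W : Type*} [TopologicalSpace X] [Zero W]
    {f : X → W} (hf : IsLocallyConstant f) {A : Set X} (ho : IsOpen A) (hc : IsClosed A) :
    IsLocallyConstant (A.indicator f) := by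
  intro s
  classical
  by_cases h0 : (0 : W) ∈ s
  · have : A.indicator f ⁻¹' s = (A ∩ f ⁻¹' s) ∪ Aᶜ := by
      ext x
      by_cases hx : x ∈ A <;>
        simp [Set.indicator_of_mem, Set.indicator_of_notMem, hx, h0]
    rw [this]
    exact (ho.inter (hf s)).union hc.isOpen_compl
  · have : A.indicator f ⁻¹' s = A ∩ f ⁻¹' s := by
      ext x
      by_cases hx : x ∈ A <;>
        simp [Set.indicator_of_mem, Set.indicator_of_notMem, hx, h0]
    rw [this]
    exact ho.inter (hf s)

theorem isLocallyConstant_of_subgroups {G W : Type*} [Group G] [TopologicalSpace G]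
    [IsTopologicalGroup G] {I : G → W}
    (h : ∀ g : G, ∃ K : Set G, IsOpen K ∧ (1 : G) ∈ K ∧ ∀ k ∈ K, I (g * k) = I g) :
    IsLocallyConstant I := by
  rw [IsLocallyConstant.iff_exists_open]
  intro x
  obtain ⟨K, hKo, h1, hK⟩ := h x
  refine ⟨(fun y => x⁻¹ * y) ⁻¹' K,
    hKo.preimage (continuous_const.mul continuous_id), by simpa using h1, ?_⟩
  intro y hy
  have := hK (x⁻¹ * y) hy
  rwa [mul_inv_cancel_left] at this

variable {G : Type*} [Group G] [TopologicalSpace G] [IsTopologicalGroup G]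

theorem rightDiag_apply (n : ℕ) (g : G) (f : SmCc (Fin (n + 1) → G) ℂ)
    (x : Fin (n + 1) → G) :
    (rightDiag G n g f : (Fin (n + 1) → G) → ℂ) x = f.1 (fun i => x i * g) := rfl

theorem rightDiag_comp (n : ℕ) (a b : G) (f : SmCc (Fin (n + 1) → G) ℂ) :
    rightDiag G n a (rightDiag G n b f) = rightDiag G n (a * b) f := by
  apply Subtype.ext
  funext x
  show f.1 (fun i => (x i * a) * b) = f.1 (fun i => x i * (a * b))
  simp [mul_assoc]

theorem rightDiag_one (n : ℕ) (f : SmCc (Fin (n + 1) → G) ℂ) :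
    rightDiag G n 1 f = f := by
  apply Subtype.ext
  funext x
  show f.1 (fun i => x i * 1) = f.1 x
  simp

theorem exists_compactOpen_superset {K₀ : Subgroup G} (hc : IsCompact (K₀ : Set G))
    (ho : IsOpen (K₀ : Set G)) {C : Set G} (hC : IsCompact C) :
    ∃ S : Set G, IsCompact S ∧ IsOpen S ∧ C ⊆ S := by
  classical
  obtain ⟨t, ht⟩ := hC.elim_finite_subcover (fun x : G => x • (K₀ : Set G))
    (fun x => ho.smul x) (fun x hx => Set.mem_iUnion.mpr ⟨x, ⟨1, K₀.one_mem, by simp⟩⟩)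
  refine ⟨⋃ x ∈ t, x • (K₀ : Set G), t.isCompact_biUnion (fun x _ => hc.smul x),
    isOpen_biUnion (fun x _ => ho.smul x), ht⟩

theorem exists_smooth_subgroup [T2Space G] (hG : HasCompactOpenBasis G) {n : ℕ}
    (f : SmCc (Fin (n + 1) → G) ℂ) :
    ∃ K : Subgroup G, IsCompact (K : Set G) ∧ IsOpen (K : Set G) ∧
      ∀ k ∈ K, ∀ x : Fin (n + 1) → G, f.1 (fun i => x i * k) = f.1 x := by
  classical
  obtain ⟨K₀, hK₀c, hK₀o, -⟩ := hG Set.univ Filter.univ_mem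
  set F0 : (Fin (n + 1) → G) → ℂ := f.1 with hF0
  have hlc : IsLocallyConstant F0 := f.2.1
  have hcs : HasCompactSupport F0 := f.2.2
  have hmcont : Continuous fun p : (Fin (n + 1) → G) × G => (fun i => p.1 i * p.2) := by
    exact continuous_pi fun i => ((continuous_apply i).comp continuous_fst).mul continuous_snd
  set D : Set ((Fin (n + 1) → G) × G) := {p | F0 (fun i => p.1 i * p.2) = F0 p.1} with hD
  have hDopen : IsOpen D := by
    have hΦ : IsLocallyConstant fun p : (Fin (n + 1) → G) × G =>
        F0 (fun i => p.1 i * p.2) - F0 p.1 :=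
      (hlc.comp_continuous hmcont).sub (hlc.comp_continuous continuous_fst)
    have : D = (fun p : (Fin (n + 1) → G) × G =>
        F0 (fun i => p.1 i * p.2) - F0 p.1) ⁻¹' {0} := by
      ext p
      simp only [hD, Set.mem_setOf_eq, Set.mem_preimage, Set.mem_singleton_iff, sub_eq_zero]
    rw [this]
    exact hΦ _
  set C : Set (Fin (n + 1) → G) :=
    (fun q : (Fin (n + 1) → G) × G => fun i => q.1 i * (q.2)⁻¹) ''
      (tsupport F0 ×ˢ (K₀ : Set G)) with hC
  have hCcomp : IsCompact C := by
    refine (hcs.prod hK₀c).image ?_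
    exact continuous_pi fun i =>
      ((continuous_apply i).comp continuous_fst).mul (continuous_snd.inv)
  have hSC : tsupport F0 ⊆ C := by
    intro y hy
    exact ⟨(y, 1), ⟨hy, K₀.one_mem⟩, by funext i; simp⟩
  have hmemD : ∀ x : C, ∃ u v : Set _, IsOpen u ∧ IsOpen v ∧ (x : Fin (n + 1) → G) ∈ u ∧
      (1 : G) ∈ v ∧ u ×ˢ v ⊆ D := by
    rintro ⟨x, hx⟩
    have hxD : (x, (1 : G)) ∈ D := by
      show F0 (fun i => x i * 1) = F0 x
      simp
    exact isOpen_prod_iff.mp hDopen x 1 hxD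
  choose u v hu hv hxu h1v huv using hmemD
  obtain ⟨t, ht⟩ := hCcomp.elim_finite_subcover u hu
    (fun x hx => Set.mem_iUnion.mpr ⟨⟨x, hx⟩, hxu ⟨x, hx⟩⟩)
  have hWnhds : ((K₀ : Set G) ∩ ⋂ i ∈ t, v i) ∈ nhds (1 : G) := by
    refine IsOpen.mem_nhds ?_ ?_
    · exact hK₀o.inter (isOpen_biInter_finset (fun i _ => hv i))
    · exact ⟨K₀.one_mem, Set.mem_biInter (fun i _ => h1v i)⟩
  obtain ⟨K, hKc, hKo, hKsub⟩ := hG _ hWnhds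
  refine ⟨K, hKc, hKo, ?_⟩
  intro k hk x
  by_cases hx : x ∈ C
  · obtain ⟨i, hit, hxi⟩ := Set.mem_iUnion₂.mp (ht hx)
    have hkv : k ∈ v i := by
      have := (hKsub hk).2
      simp only [Set.mem_iInter] at this
      exact this i hit
    exact huv i (Set.mk_mem_prod hxi hkv)
  · have h1 : F0 x = 0 := image_eq_zero_of_notMem_tsupport (fun h => hx (hSC h))
    have h2 : F0 (fun i => x i * k) = 0 := by
      by_contra h0
      apply hx
      refine ⟨((fun i => x i * k), k), ⟨subset_tsupport _ h0, (hKsub hk).1⟩, ?_⟩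
      funext i
      simp
    show F0 (fun i => x i * k) = F0 x
    rw [h1, h2]

theorem cut_mem_smCc [T2Space G] {n : ℕ} {K₀ : Subgroup G} (hK₀o : IsOpen (K₀ : Set G))
    (hK₀cl : IsClosed (K₀ : Set G)) (f : SmCc (Fin (n + 1) → G) ℂ) (g : G) :
    ((fun x : Fin (n + 1) → G => x (Fin.last n) * g) ⁻¹' (K₀ : Set G)).indicator f.1
      ∈ SmCc (Fin (n + 1) → G) ℂ := by
  have hcont : Continuous fun x : Fin (n + 1) → G => x (Fin.last n) * g :=
    (continuous_apply _).mul continuous_const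
  refine ⟨f.2.1.indicator_clopen (hK₀o.preimage hcont) (hK₀cl.preimage hcont), ?_⟩
  refine HasCompactSupport.mono f.2.2 ?_
  intro x hx
  simp only [Function.mem_support] at hx ⊢
  intro hfx
  apply hx
  by_cases hxA : x ∈ (fun x : Fin (n + 1) → G => x (Fin.last n) * g) ⁻¹' (K₀ : Set G)
  · rw [Set.indicator_of_mem hxA, hfx]
  · rw [Set.indicator_of_notMem hxA]

end TopAux
/-- For an `l`-group `G`, the smooth `G`-module `C_c^∞(G^{n+1})` (with the
diagonal right translation action) is projective in the category of smooth `G`-modules. -/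
theorem projective_smCc_of_lGroup
    (G : Type*) [Group G] [TopologicalSpace G] [IsTopologicalGroup G] [T2Space G]
    [LocallyCompactSpace G] [TotallyDisconnectedSpace G] [SigmaCompactSpace G]
    (hG : HasCompactOpenBasis G) (n : ℕ)
    (U V : Type*) [AddCommGroup U] [Module ℂ U] [AddCommGroup V] [Module ℂ V]
    (ρU : Representation ℂ G U) (ρV : Representation ℂ G V)
    (hρU : SmoothRep ρU) (hρV : SmoothRep ρV)
    (P : U →ₗ[ℂ] V) (hP : Function.Surjective P)
    (hPeq : ∀ (g : G) (u : U), P (ρU g u) = ρV g (P u))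
    (F : SmCc (Fin (n + 1) → G) ℂ →ₗ[ℂ] V)
    (hFeq : ∀ (g : G) (f : SmCc (Fin (n + 1) → G) ℂ), F (rightDiag G n g f) = ρV g (F f)) :
    ∃ Fbar : SmCc (Fin (n + 1) → G) ℂ →ₗ[ℂ] U,
      (∀ (g : G) (f : SmCc (Fin (n + 1) → G) ℂ), Fbar (rightDiag G n g f) = ρU g (Fbar f)) ∧
      P ∘ₗ Fbar = F := by
    classical
  letI mG : MeasurableSpace G := borel G
  haveI hbG : BorelSpace G := ⟨rfl⟩
  obtain ⟨K₀, hK₀c, hK₀o, -⟩ := hG Set.univ Filter.univ_mem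
  have hK₀cl : IsClosed (K₀ : Set G) := hK₀c.isClosed
  set μ : Measure G := Measure.haar with hμdef
  haveI hμL : μ.IsMulLeftInvariant := by rw [hμdef]; infer_instance
  haveI hμF : IsFiniteMeasureOnCompacts μ := by rw [hμdef]; infer_instance
  haveI hμO : μ.IsOpenPosMeasure := by rw [hμdef]; infer_instance
  obtain ⟨σ, hσ⟩ := P.exists_rightInverse_of_surjective (LinearMap.range_eq_top.2 hP)
  have hPσ : ∀ v : V, P (σ v) = v := fun v => by
    have := LinearMap.congr_fun hσ v
    simpa using this
  -- the "cut-off" operator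
  set cut : SmCc (Fin (n + 1) → G) ℂ → G → SmCc (Fin (n + 1) → G) ℂ := fun f g =>
    ⟨_, cut_mem_smCc hK₀o hK₀cl f g⟩ with hcutdef
  have hcut_apply : ∀ f g x, (cut f g).1 x =
      ((fun x : Fin (n + 1) → G => x (Fin.last n) * g) ⁻¹' (K₀ : Set G)).indicator f.1 x :=
    fun _ _ _ => rfl
  have hcut_add : ∀ f f' g, cut (f + f') g = cut f g + cut f' g := by
    intro f f' g
    apply Subtype.ext
    funext x
    show _ = (cut f g).1 x + (cut f' g).1 x
    rw [hcut_apply, hcut_apply, hcut_apply]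
    by_cases hx : x ∈ (fun x : Fin (n + 1) → G => x (Fin.last n) * g) ⁻¹' (K₀ : Set G)
    · simp only [Set.indicator_of_mem hx]
      rfl
    · simp only [Set.indicator_of_notMem hx, add_zero]
  have hcut_smul : ∀ (c : ℂ) f g, cut (c • f) g = c • cut f g := by
    intro c f g
    apply Subtype.ext
    funext x
    show _ = c • (cut f g).1 x
    rw [hcut_apply, hcut_apply]
    by_cases hx : x ∈ (fun x : Fin (n + 1) → G => x (Fin.last n) * g) ⁻¹' (K₀ : Set G)
    · simp only [Set.indicator_of_mem hx]
      rfl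
    · simp only [Set.indicator_of_notMem hx, smul_zero]
  have hcut_right : ∀ (h : G) f g,
      cut (rightDiag G n h f) g = rightDiag G n h (cut f (h⁻¹ * g)) := by
    intro h f g
    apply Subtype.ext
    funext x
    show (cut (rightDiag G n h f) g).1 x = (cut f (h⁻¹ * g)).1 (fun i => x i * h)
    rw [hcut_apply, hcut_apply]
    have hmem : ((fun i => x i * h) (Fin.last n) * (h⁻¹ * g) ∈ (K₀ : Set G))
        ↔ (x (Fin.last n) * g ∈ (K₀ : Set G)) := by
      have : (fun i => x i * h) (Fin.last n) * (h⁻¹ * g) = x (Fin.last n) * g := by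
        show x (Fin.last n) * h * (h⁻¹ * g) = x (Fin.last n) * g
        group
      rw [this]
    by_cases hx : x (Fin.last n) * g ∈ (K₀ : Set G)
    · rw [Set.indicator_of_mem
          (show x ∈ (fun x : Fin (n + 1) → G => x (Fin.last n) * g) ⁻¹' (K₀ : Set G) from hx),
        Set.indicator_of_mem
          (show (fun i => x i * h) ∈
            (fun x : Fin (n + 1) → G => x (Fin.last n) * (h⁻¹ * g)) ⁻¹' (K₀ : Set G) from
            hmem.mpr hx)]
      rfl
    · rw [Set.indicator_of_notMem
          (show x ∉ (fun x : Fin (n + 1) → G => x (Fin.last n) * g) ⁻¹' (K₀ : Set G) from hx),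
        Set.indicator_of_notMem
          (show (fun i => x i * h) ∉
            (fun x : Fin (n + 1) → G => x (Fin.last n) * (h⁻¹ * g)) ⁻¹' (K₀ : Set G) from
            fun h' => hx (hmem.mp h'))]
  have hcut_K₀ : ∀ f g k, k ∈ K₀ → cut f (g * k) = cut f g := by
    intro f g k hk
    apply Subtype.ext
    funext x
    rw [hcut_apply, hcut_apply]
    have hmem : (x (Fin.last n) * (g * k) ∈ (K₀ : Set G))
        ↔ (x (Fin.last n) * g ∈ (K₀ : Set G)) := by
      rw [← mul_assoc]
      exact K₀.mul_mem_cancel_right hk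
    by_cases hx : x (Fin.last n) * g ∈ (K₀ : Set G)
    · rw [Set.indicator_of_mem
          (show x ∈ (fun x : Fin (n + 1) → G => x (Fin.last n) * (g * k)) ⁻¹' (K₀ : Set G) from
            hmem.mpr hx),
        Set.indicator_of_mem
          (show x ∈ (fun x : Fin (n + 1) → G => x (Fin.last n) * g) ⁻¹' (K₀ : Set G) from hx)]
    · rw [Set.indicator_of_notMem
          (show x ∉ (fun x : Fin (n + 1) → G => x (Fin.last n) * (g * k)) ⁻¹' (K₀ : Set G) from
            fun h' => hx (hmem.mp h')),
        Set.indicator_of_notMem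
          (show x ∉ (fun x : Fin (n + 1) → G => x (Fin.last n) * g) ⁻¹' (K₀ : Set G) from hx)]
  have hcut_supp : ∀ f g, cut f g ≠ 0 →
      g ∈ ((fun x : Fin (n + 1) → G => (x (Fin.last n))⁻¹) '' tsupport f.1) * (K₀ : Set G) := by
    intro f g hne
    have : (cut f g).1 ≠ 0 := fun h => hne (Subtype.ext h)
    obtain ⟨x, hx⟩ := Function.ne_iff.mp this
    rw [hcut_apply] at hx
    by_cases hxA : x ∈ (fun x : Fin (n + 1) → G => x (Fin.last n) * g) ⁻¹' (K₀ : Set G)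
    · rw [Set.indicator_of_mem hxA] at hx
      refine ⟨(x (Fin.last n))⁻¹, ⟨x, subset_tsupport _ hx, rfl⟩,
        x (Fin.last n) * g, hxA, by group⟩
    · rw [Set.indicator_of_notMem hxA] at hx
      exact absurd rfl hx
  -- the integrand
  set If : SmCc (Fin (n + 1) → G) ℂ → G → U := fun f g =>
    ρU g (σ (F (rightDiag G n g⁻¹ (cut f g)))) with hIfdef
  have hIf_add : ∀ f f' g, If (f + f') g = If f g + If f' g := by
    intro f f' g
    show ρU g (σ (F (rightDiag G n g⁻¹ (cut (f + f') g)))) = _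
    rw [hcut_add, map_add, map_add, map_add, map_add]
  have hIf_smul : ∀ (c : ℂ) f g, If (c • f) g = c • If f g := by
    intro c f g
    show ρU g (σ (F (rightDiag G n g⁻¹ (cut (c • f) g)))) = _
    rw [hcut_smul, _root_.map_smul, _root_.map_smul, _root_.map_smul, _root_.map_smul]
  have hcs_If : ∀ f, HasCompactSupport (If f) := by
    intro f
    refine HasCompactSupport.intro (K := ((fun x : Fin (n + 1) → G =>
        (x (Fin.last n))⁻¹) '' tsupport f.1) * (K₀ : Set G)) ?_ ?_
    · exact (f.2.2.image (continuous_apply (Fin.last n)).inv).mul hK₀c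
    · intro g hg
      have hzero : cut f g = 0 := by
        by_contra hne
        exact hg (hcut_supp f g hne)
      show ρU g (σ (F (rightDiag G n g⁻¹ (cut f g)))) = 0
      rw [hzero, map_zero, map_zero, map_zero, map_zero]
  have hlc_If : ∀ f, IsLocallyConstant (If f) := by
    intro f
    apply isLocallyConstant_of_subgroups
    intro g
    obtain ⟨Ku, hKuc, hKuo, hKu⟩ := exists_smooth_subgroup hG (rightDiag G n g⁻¹ (cut f g))
    obtain ⟨Ks, hKso, hKsfix⟩ := hρU (σ (F (rightDiag G n g⁻¹ (cut f g))))
    have hint : ((K₀ : Set G) ∩ ((Ku : Set G) ∩ (Ks : Set G))) ∈ nhds (1 : G) :=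
      IsOpen.mem_nhds (hK₀o.inter (hKuo.inter hKso))
        ⟨K₀.one_mem, Ku.one_mem, Ks.one_mem⟩
    obtain ⟨K, hKc', hKo', hKsub'⟩ := hG _ hint
    refine ⟨(K : Set G), hKo', K.one_mem, ?_⟩
    intro k hk
    have hk₀ : k ∈ K₀ := (hKsub' hk).1
    have hku : k ∈ Ku := (hKsub' hk).2.1
    have hks : k ∈ Ks := (hKsub' hk).2.2
    show ρU (g * k) (σ (F (rightDiag G n (g * k)⁻¹ (cut f (g * k))))) = If f g
    rw [hcut_K₀ f g k hk₀]
    have e1 : rightDiag G n (g * k)⁻¹ (cut f g)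
        = rightDiag G n k⁻¹ (rightDiag G n g⁻¹ (cut f g)) := by
      rw [rightDiag_comp, mul_inv_rev]
    have e2 : rightDiag G n k⁻¹ (rightDiag G n g⁻¹ (cut f g))
        = rightDiag G n g⁻¹ (cut f g) := by
      apply Subtype.ext
      funext x
      exact hKu k⁻¹ (Ku.inv_mem hku) x
    rw [e1, e2, map_mul]
    show ρU g (ρU k (σ (F (rightDiag G n g⁻¹ (cut f g))))) = _
    rw [hKsfix k hks]
    -- the SmCc-valued function g ↦ cut f g
  have hlc_J : ∀ f, IsLocallyConstant (fun g => cut f g) := by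
    intro f
    apply isLocallyConstant_of_subgroups
    intro g
    exact ⟨(K₀ : Set G), hK₀o, K₀.one_mem, fun k hk => hcut_K₀ f g k hk⟩
  have hcs_J : ∀ f, HasCompactSupport (fun g => cut f g) := by
    intro f
    refine HasCompactSupport.intro (K := ((fun x : Fin (n + 1) → G =>
        (x (Fin.last n))⁻¹) '' tsupport f.1) * (K₀ : Set G)) ?_ ?_
    · exact (f.2.2.image (continuous_apply (Fin.last n)).inv).mul hK₀c
    · intro g hg
      by_contra hne
      exact hg (hcut_supp f g hne)
  -- equivariance of the integrand
  have hIf_equi : ∀ (h : G) f g, If (rightDiag G n h f) g = ρU h (If f (h⁻¹ * g)) := by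
    intro h f g
    show ρU g (σ (F (rightDiag G n g⁻¹ (cut (rightDiag G n h f) g))))
      = ρU h (ρU (h⁻¹ * g) (σ (F (rightDiag G n (h⁻¹ * g)⁻¹ (cut f (h⁻¹ * g))))))
    rw [hcut_right h f g, rightDiag_comp]
    have e1 : g⁻¹ * h = (h⁻¹ * g)⁻¹ := by group
    rw [e1, ← Module.End.mul_apply, ← map_mul, mul_inv_cancel_left]
  -- the normalisation constant
  set c₀ : ℂ := (((μ (K₀ : Set G)).toReal : ℝ) : ℂ) with hc₀def
  have hc₀ne : c₀ ≠ 0 := by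
    rw [hc₀def]
    simp only [ne_eq, Complex.ofReal_eq_zero]
    exact ENNReal.toReal_ne_zero.mpr
      ⟨hK₀o.measure_ne_zero μ ⟨1, K₀.one_mem⟩, hK₀c.measure_lt_top.ne⟩
  -- the underlying linear map
  set Fb : SmCc (Fin (n + 1) → G) ℂ →ₗ[ℂ] U :=
    { toFun := fun f => smInt μ (If f)
      map_add' := by
        intro f f'
        obtain ⟨S, hSc, hSo, hSsub⟩ := exists_compactOpen_superset hK₀c hK₀o
          ((hcs_If f).union (hcs_If f'))
        have h1 : tsupport (If f) ⊆ S := (Set.subset_union_left).trans hSsub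
        have h2 : tsupport (If f') ⊆ S := (Set.subset_union_right).trans hSsub
        have e : If (f + f') = fun g => If f g + If f' g := funext fun g => hIf_add f f' g
        show smInt μ (If (f + f')) = smInt μ (If f) + smInt μ (If f')
        rw [e, smInt_add μ (hlc_If f) (hcs_If f) (hlc_If f') (hcs_If f') hSc hSo h1 h2]
      map_smul' := by
        intro c f
        obtain ⟨S, hSc, hSo, hSsub⟩ := exists_compactOpen_superset hK₀c hK₀o (hcs_If f)
        have e : If (c • f) = fun g => (c • (LinearMap.id : U →ₗ[ℂ] U)) (If f g) :=
          funext fun g => hIf_smul c f g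
        show smInt μ (If (c • f)) = _
        rw [e, smInt_comp_linear μ _ (hlc_If f) (hcs_If f) hSc hSo hSsub]
        simp } with hFbdef
  have hFbval : ∀ f, Fb f = smInt μ (If f) := fun f => rfl
  refine ⟨c₀⁻¹ • Fb, ?_, ?_⟩
  · -- equivariance
    intro h f
    have e1 : If (rightDiag G n h f) = fun g => ρU h (If f (h⁻¹ * g)) :=
      funext fun g => hIf_equi h f g
    have lc2 : IsLocallyConstant (fun g => If f (h⁻¹ * g)) :=
      (hlc_If f).comp_continuous (continuous_const.mul continuous_id)
    have cs2 : HasCompactSupport (fun g => If f (h⁻¹ * g)) :=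
      (hcs_If f).comp_homeomorph (Homeomorph.mulLeft h⁻¹)
    obtain ⟨S, hSc, hSo, hSsub⟩ := exists_compactOpen_superset hK₀c hK₀o cs2
    show c₀⁻¹ • Fb (rightDiag G n h f) = ρU h (c₀⁻¹ • Fb f)
    have e2 : Fb (rightDiag G n h f) = ρU h (Fb f) := by
      rw [hFbval, hFbval, e1, smInt_comp_linear μ (ρU h) lc2 cs2 hSc hSo hSsub,
        smInt_comp_mul_left μ h⁻¹ (If f)]
    rw [e2, _root_.map_smul]
  · -- lifting property
    apply LinearMap.ext
    intro f
    show P (c₀⁻¹ • Fb f) = F f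
    rw [_root_.map_smul, hFbval]
    obtain ⟨S, hSc, hSo, hSsub⟩ := exists_compactOpen_superset hK₀c hK₀o (hcs_If f)
    rw [← smInt_comp_linear μ P (hlc_If f) (hcs_If f) hSc hSo hSsub]
    have hPIf : (fun g => P (If f g)) = fun g => F (cut f g) := by
      funext g
      show P (ρU g (σ (F (rightDiag G n g⁻¹ (cut f g))))) = _
      rw [hPeq, hPσ, ← hFeq, rightDiag_comp, mul_inv_cancel, rightDiag_one]
    rw [hPIf]
    obtain ⟨S', hS'c, hS'o, hS'sub⟩ := exists_compactOpen_superset hK₀c hK₀o (hcs_J f)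
    rw [show (fun g => F (cut f g)) = fun g => F ((fun g => cut f g) g) from rfl,
      smInt_comp_linear μ F (hlc_J f) (hcs_J f) hS'c hS'o hS'sub]
    have hJval : smInt μ (fun g => cut f g) = c₀ • f := by
      apply Subtype.ext
      funext x
      set Ev : SmCc (Fin (n + 1) → G) ℂ →ₗ[ℂ] ℂ :=
        (LinearMap.proj x).comp (SmCc (Fin (n + 1) → G) ℂ).subtype with hEvdef
      have h1 : Ev (smInt μ (fun g => cut f g)) = smInt μ (fun g => Ev (cut f g)) :=
        (smInt_comp_linear μ Ev (hlc_J f) (hcs_J f) hS'c hS'o hS'sub).symm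
      have h2 : (fun g => Ev (cut f g))
          = fun g => ((fun g : G => x (Fin.last n) * g) ⁻¹' (K₀ : Set G)).indicator
              (fun _ => f.1 x) g := by
        funext g
        show (cut f g).1 x = _
        rw [hcut_apply]
        by_cases hg : x (Fin.last n) * g ∈ (K₀ : Set G)
        · rw [Set.indicator_of_mem
              (show x ∈ (fun x : Fin (n + 1) → G => x (Fin.last n) * g) ⁻¹' (K₀ : Set G)
                from hg),
            Set.indicator_of_mem
              (show g ∈ (fun g : G => x (Fin.last n) * g) ⁻¹' (K₀ : Set G) from hg)]
        · rw [Set.indicator_of_notMem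
              (show x ∉ (fun x : Fin (n + 1) → G => x (Fin.last n) * g) ⁻¹' (K₀ : Set G)
                from hg),
            Set.indicator_of_notMem
              (show g ∉ (fun g : G => x (Fin.last n) * g) ⁻¹' (K₀ : Set G) from hg)]
      have h3 : smInt μ (fun g => ((fun g : G => x (Fin.last n) * g) ⁻¹' (K₀ : Set G)).indicator
          (fun _ => f.1 x) g) = c₀ * f.1 x := by
        have hAmeas : MeasurableSet ((fun g : G => x (Fin.last n) * g) ⁻¹' (K₀ : Set G)) :=
          (hK₀o.preimage (continuous_const.mul continuous_id)).measurableSet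
        have hAμ : μ ((fun g : G => x (Fin.last n) * g) ⁻¹' (K₀ : Set G)) = μ (K₀ : Set G) :=
          measure_preimage_mul μ (x (Fin.last n)) (K₀ : Set G)
        rw [smInt_eq_sum μ ({0} : Finset (Fin 1))
          (fun _ => (fun g : G => x (Fin.last n) * g) ⁻¹' (K₀ : Set G))
          (fun _ => f.1 x) (fun _ _ => hAmeas)
          (fun _ _ => by rw [hAμ]; exact hK₀c.measure_lt_top.ne)
          (by intro a _ b _ hne; exact absurd (Subsingleton.elim a b) hne)
          _ (fun g => by rw [Finset.sum_singleton])]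
        rw [Finset.sum_singleton, hAμ, smul_eq_mul, hc₀def]
      rw [hEvdef] at h1
      have lhs : (smInt μ (fun g => cut f g)).1 x = c₀ * f.1 x := by
        have := h1
        rw [h2, h3] at this
        exact this
      rw [lhs]
      show c₀ * f.1 x = (c₀ • f).1 x
      rfl
    rw [hJval, _root_.map_smul, smul_smul, inv_mul_cancel₀ hc₀ne, one_smul]
end
end

section
/- Let G be an l-group with left Haar measure dg, (π, V) a smooth G-module, and n ≥ 1. Let G act on C_c^∞(G^{n+1}, V) by (g·f)(g₀,…,g_n) = π(g)(f(g^{-1}g₀,…,g^{-1}g_n)). Define T_n: C_c^∞(G^{n+1}, V) → C_c^∞(G^n, V) by (T_n f)(g₁,…,g_n) = ∫_G π(g)^{-1}(f(g, g g₁, g g₁ g₂, …, g g₁⋯g_n)) dg. Then T_n is surjective, and its kernel equals the linear span of the elements g·f − f with g ∈ G and f ∈ C_c^∞(G^{n+1}, V). -/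
open MeasureTheory
open scoped Pointwise

noncomputable section
set_option linter.unusedSectionVars false
set_option maxHeartbeats 1000000

/-- The diagonal action `(g·f)(g₀,…,g_k) = π(g)(f(g⁻¹g₀,…,g⁻¹g_k))` on `V`-valued functions
on `G^{k+1}`. -/
def inhAct {G : Type*} [Group G] {V : Type*} [AddCommGroup V] [Module ℂ V]
    (ρ : Representation ℂ G V) {k : ℕ} (g : G) (f : (Fin k → G) → V) : (Fin k → G) → V :=
  fun x => ρ g (f (fun i => g⁻¹ * x i))

/-- The map `(T_n f)(g₁,…,g_n) = ∫_G π(g)⁻¹(f(g, gg₁, gg₁g₂, …, gg₁⋯g_n)) dg`. -/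
def Tnmap {G : Type*} [Group G] [MeasurableSpace G] (μ : Measure G) {V : Type*}
    [AddCommGroup V] [Module ℂ V] (ρ : Representation ℂ G V) (n : ℕ)
    (f : (Fin (n + 1) → G) → V) : (Fin n → G) → V :=
  fun x => smInt μ (fun g => ρ g⁻¹ (f (fun j : Fin (n + 1) => g * Fin.partialProd x j)))


section AuxLemmas

variable {G : Type*} [Group G] [TopologicalSpace G] [IsTopologicalGroup G] [T2Space G]
variable {V : Type*} [AddCommGroup V] [Module ℂ V]

lemma mem_SmCc {X : Type*} [TopologicalSpace X] {f : X → V} :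
    f ∈ SmCc X V ↔ IsLocallyConstant f ∧ HasCompactSupport f := Iff.rfl

lemma mem_coset_iff {K : Subgroup G} {i g : G} :
    g ∈ i • (K : Set G) ↔ (QuotientGroup.mk i : G ⧸ K) = QuotientGroup.mk g := by
  rw [Set.mem_smul_set_iff_inv_smul_mem, smul_eq_mul, QuotientGroup.eq]
  exact Iff.rfl

section SmIntPart
variable [MeasurableSpace G] [BorelSpace G]


lemma smInt_zero {X : Type*} [MeasurableSpace X] (μ : Measure X) :
    smInt μ (fun _ : X => (0 : V)) = 0 := by
  refine finsum_eq_zero_of_forall_eq_zero fun w => ?_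
  by_cases hw : w = 0
  · rw [hw, smul_zero]
  · have : (fun _ : X => (0 : V)) ⁻¹' {w} = ∅ := by
      ext x
      simp [Ne.symm hw, eq_comm]
    rw [this]
    simp

lemma smInt_translate (μ : Measure G) [μ.IsMulLeftInvariant] (a : G) (ψ : G → V) :
    smInt μ (fun g => ψ (a * g)) = smInt μ ψ := by
  unfold smInt
  refine finsum_congr fun w => ?_
  have h : (fun g => ψ (a * g)) ⁻¹' {w} = (fun g => a * g) ⁻¹' (ψ ⁻¹' {w}) := rfl
  rw [h, measure_preimage_mul]

/-- The basic computation of `smInt` of a function constant on left cosets of a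
compact open subgroup. -/
lemma smInt_coset (μ : Measure G) [μ.IsHaarMeasure] {K : Subgroup G}
    (hKc : IsCompact (K : Set G)) (hKo : IsOpen (K : Set G))
    {s : Finset G}
    (hs : ∀ i ∈ s, ∀ j ∈ s, (QuotientGroup.mk i : G ⧸ K) = QuotientGroup.mk j → i = j)
    {ψ : G → V}
    (hinv : ∀ (i g : G), (QuotientGroup.mk i : G ⧸ K) = QuotientGroup.mk g → ψ g = ψ i)
    (hsupp : ∀ g, ψ g ≠ 0 → ∃ i ∈ s, (QuotientGroup.mk i : G ⧸ K) = QuotientGroup.mk g) :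
    smInt μ ψ = (((μ (K : Set G)).toReal : ℝ) : ℂ) • ∑ i ∈ s, ψ i := by
  classical
  have hμK : μ (K : Set G) ≠ ⊤ := hKc.measure_lt_top.ne
  have hcosetμ : ∀ i : G, μ (i • (K : Set G)) = μ (K : Set G) := by
    intro i
    have h : i • (K : Set G) = (fun h => i⁻¹ * h) ⁻¹' (K : Set G) := by
      ext g
      simp [Set.mem_smul_set_iff_inv_smul_mem]
    rw [h, measure_preimage_mul]
  have hfiber : ∀ w : V, w ≠ 0 →
      ψ ⁻¹' {w} = ⋃ i ∈ s.filter (fun i => ψ i = w), i • (K : Set G) := by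
    intro w hw
    ext g
    simp only [Set.mem_preimage, Set.mem_singleton_iff, Set.mem_iUnion, Finset.mem_filter,
      exists_prop]
    constructor
    · intro hg
      obtain ⟨i, his, hig⟩ := hsupp g (by rw [hg]; exact hw)
      exact ⟨i, ⟨his, by rw [← hinv i g hig, hg]⟩, mem_coset_iff.mpr hig⟩
    · rintro ⟨i, ⟨his, hiw⟩, hgi⟩
      rw [hinv i g (mem_coset_iff.mp hgi), hiw]
  have hmeas : ∀ w : V, w ≠ 0 → (μ (ψ ⁻¹' {w})).toReal
      = ∑ i ∈ s.filter (fun i => ψ i = w), (μ (K : Set G)).toReal := by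
    intro w hw
    rw [hfiber w hw, measure_biUnion_finset ?disj ?meas]
    · rw [ENNReal.toReal_sum (fun i _ => by rw [hcosetμ]; exact hμK)]
      exact Finset.sum_congr rfl fun i _ => by rw [hcosetμ]
    case disj =>
      intro i hi j hj hij
      simp only [Finset.coe_filter, Set.mem_setOf_eq] at hi hj
      refine Set.disjoint_left.mpr fun g hgi hgj => hij ?_
      exact hs i (hi.1) j (hj.1) ((mem_coset_iff.mp hgi).trans (mem_coset_iff.mp hgj).symm)
    case meas =>
      exact fun i _ => (hKo.smul i).measurableSet
  have hsub : Function.support (fun w : V => (((μ (ψ ⁻¹' {w})).toReal : ℝ) : ℂ) • w)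
      ⊆ ↑(insert (0 : V) (s.image ψ)) := by
    intro w hw
    simp only [Function.mem_support] at hw
    by_contra hmem
    simp only [Finset.coe_insert, Set.mem_insert_iff, Finset.mem_coe, Finset.mem_image] at hmem
    push_neg at hmem
    obtain ⟨hw0, hwim⟩ := hmem
    have hempty : ψ ⁻¹' {w} = ∅ := by
      rw [hfiber w hw0]
      have : s.filter (fun i => ψ i = w) = ∅ :=
        Finset.filter_eq_empty_iff.mpr fun i hi => hwim i hi
      rw [this]
      simp
    rw [hempty] at hw
    simp at hw
  have hterm : ∀ w ∈ insert (0 : V) (s.image ψ),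
      (((μ (ψ ⁻¹' {w})).toReal : ℝ) : ℂ) • w
        = ∑ i ∈ s.filter (fun i => ψ i = w),
            (((μ (K : Set G)).toReal : ℝ) : ℂ) • ψ i := by
    intro w _
    by_cases hw0 : w = 0
    · rw [hw0, smul_zero, Finset.sum_eq_zero]
      intro i hi
      rw [(Finset.mem_filter.mp hi).2, smul_zero]
    · rw [hmeas w hw0]
      push_cast
      rw [Finset.sum_smul]
      exact Finset.sum_congr rfl fun i hi => by rw [(Finset.mem_filter.mp hi).2]
  calc smInt μ ψ = ∑ w ∈ insert (0 : V) (s.image ψ),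
        (((μ (ψ ⁻¹' {w})).toReal : ℝ) : ℂ) • w :=
        finsum_eq_finset_sum_of_support_subset _ hsub
    _ = ∑ w ∈ insert (0 : V) (s.image ψ), ∑ i ∈ s.filter (fun i => ψ i = w),
          (((μ (K : Set G)).toReal : ℝ) : ℂ) • ψ i := Finset.sum_congr rfl hterm
    _ = ∑ i ∈ s, (((μ (K : Set G)).toReal : ℝ) : ℂ) • ψ i :=
        Finset.sum_fiberwise_of_maps_to
          (fun i hi => Finset.mem_insert_of_mem (Finset.mem_image_of_mem ψ hi)) _
    _ = (((μ (K : Set G)).toReal : ℝ) : ℂ) • ∑ i ∈ s, ψ i := (Finset.smul_sum).symm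


end SmIntPart

/-- Extract a set of distinct-coset representatives from a finite set, covering the same
union of cosets. -/
lemma coset_extract (K : Subgroup G) (t : Finset G) :
    ∃ s : Finset G,
      (∀ i ∈ s, ∀ j ∈ s, (QuotientGroup.mk i : G ⧸ K) = QuotientGroup.mk j → i = j) ∧
      (⋃ i ∈ t, i • (K : Set G)) ⊆ ⋃ i ∈ s, i • (K : Set G) := by
  classical
  refine ⟨t.image (fun g => Quotient.out (QuotientGroup.mk g : G ⧸ K)), ?_, ?_⟩
  · intro i hi j hj hij
    simp only [Finset.mem_image] at hi hj
    obtain ⟨qi, -, rfl⟩ := hi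
    obtain ⟨qj, -, rfl⟩ := hj
    rw [QuotientGroup.out_eq', QuotientGroup.out_eq'] at hij
    rw [hij]
  · intro g hg
    simp only [Set.mem_iUnion] at hg ⊢
    obtain ⟨i, hi, hgi⟩ := hg
    refine ⟨Quotient.out (QuotientGroup.mk i : G ⧸ K), ?_, ?_⟩
    · exact Finset.mem_image_of_mem _ hi
    · rw [mem_coset_iff, QuotientGroup.out_eq']
      exact mem_coset_iff.mp hgi

/-- Cover a compact set by finitely many disjoint left cosets of an open subgroup. -/
lemma compact_coset_cover {K : Subgroup G} (hKo : IsOpen (K : Set G)) {C : Set G}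
    (hC : IsCompact C) :
    ∃ s : Finset G,
      (∀ i ∈ s, ∀ j ∈ s, (QuotientGroup.mk i : G ⧸ K) = QuotientGroup.mk j → i = j) ∧
      C ⊆ ⋃ i ∈ s, i • (K : Set G) := by
  classical
  obtain ⟨b', hb'sub, hb'fin, hb'cov⟩ := hC.elim_finite_subcover_image
    (b := Set.univ) (c := fun g => g • (K : Set G)) (fun i _ => hKo.smul i)
    (fun g hg => Set.mem_biUnion (Set.mem_univ g) ⟨1, K.one_mem, mul_one g⟩)
  obtain ⟨s, hs, hscov⟩ := coset_extract K hb'fin.toFinset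
  refine ⟨s, hs, fun g hg => hscov ?_⟩
  have := hb'cov hg
  simp only [Set.mem_iUnion] at this ⊢
  obtain ⟨i, hi, hgi⟩ := this
  exact ⟨i, hb'fin.mem_toFinset.mpr hi, hgi⟩

-- CHUNK2
section TopLemmas

variable {G : Type*} [Group G] [TopologicalSpace G] [IsTopologicalGroup G] [T2Space G]
variable {V : Type*} [AddCommGroup V] [Module ℂ V]

/-- Uniform right-invariance: a locally constant compactly supported function on `G × X`
is right-invariant in the `G`-variable under some compact open subgroup. -/
lemma box_lemma {X : Type*} [TopologicalSpace X] (hG : HasCompactOpenBasis G)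
    {Φ : G × X → V} (hlc : IsLocallyConstant Φ) (hcs : HasCompactSupport Φ) :
    ∃ K : Subgroup G, IsCompact (K : Set G) ∧ IsOpen (K : Set G) ∧
      ∀ (g : G) (x : X), ∀ k ∈ K, Φ (g * k, x) = Φ (g, x) := by
  classical
  obtain ⟨K₀, hK₀c, hK₀o, -⟩ := hG Set.univ Filter.univ_mem
  have key : ∀ p : G × X, ∃ (K : Subgroup G) (w : Set X),
      IsCompact (K : Set G) ∧ IsOpen (K : Set G) ∧ IsOpen w ∧
      p ∈ (p.1 • (K : Set G)) ×ˢ w ∧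
      ∀ q ∈ (p.1 • (K : Set G)) ×ˢ w, Φ q = Φ p := by
    intro p
    have hopen : IsOpen (Φ ⁻¹' {Φ p}) := hlc _
    obtain ⟨u, v, hu, hv, hpu, hpv, huv⟩ := isOpen_prod_iff.mp hopen p.1 p.2 rfl
    obtain ⟨K, hKc, hKo, hKu⟩ := hG ((fun k => p.1 * k) ⁻¹' u)
      ((hu.preimage (continuous_mul_left p.1)).mem_nhds (by simpa using hpu))
    refine ⟨K, v, hKc, hKo, hv, ⟨⟨1, K.one_mem, mul_one p.1⟩, hpv⟩, ?_⟩
    rintro ⟨q1, q2⟩ ⟨hq1, hq2⟩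
    obtain ⟨k, hk, rfl⟩ := hq1
    exact huv ⟨hKu hk, hq2⟩
  choose Ks ws hKsc hKso hws hmem hconst using key
  obtain ⟨b', hb'sub, hb'fin, hb'cov⟩ := hcs.elim_finite_subcover_image
      (b := Set.univ) (c := fun p => (p.1 • (Ks p : Set G)) ×ˢ ws p)
      (fun p _ => ((hKso p).smul p.1).prod (hws p))
      (fun p hp => Set.mem_biUnion (Set.mem_univ p) (hmem p))
  set K : Subgroup G := K₀ ⊓ ⨅ p ∈ b', Ks p with hK
  have hKset : (K : Set G) = (K₀ : Set G) ∩ ⋂ p, ⋂ _ : p ∈ b', (Ks p : Set G) := by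
    rw [hK]
    simp [Subgroup.coe_iInf]
  have hKsub : ∀ p ∈ b', (K : Set G) ⊆ (Ks p : Set G) := by
    intro p hp g hg
    rw [hKset] at hg
    exact Set.mem_iInter.mp (Set.mem_iInter.mp hg.2 p) hp
  have hKcl : IsClosed (K : Set G) := by
    rw [hKset]
    exact hK₀c.isClosed.inter
      (isClosed_iInter fun p => isClosed_iInter fun hp => (hKsc p).isClosed)
  have hKcc : IsCompact (K : Set G) :=
    hK₀c.of_isClosed_subset hKcl (by rw [hKset]; exact Set.inter_subset_left)
  have hKop : IsOpen (K : Set G) := by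
    rw [hKset]
    exact hK₀o.inter (hb'fin.isOpen_biInter fun p hp => hKso p)
  have step : ∀ (g : G) (x : X) (k : G), k ∈ K →
      (g, x) ∈ ⋃ p ∈ b', (p.1 • (Ks p : Set G)) ×ˢ ws p → Φ (g * k, x) = Φ (g, x) := by
    intro g x k hk hmem'
    simp only [Set.mem_iUnion] at hmem'
    obtain ⟨p, hp, hgx⟩ := hmem'
    have h1 : Φ (g, x) = Φ p := hconst p _ hgx
    have h2 : Φ (g * k, x) = Φ p := by
      refine hconst p _ ⟨?_, hgx.2⟩
      obtain ⟨k', hk', hgk'⟩ := hgx.1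
      refine ⟨k' * k, (Ks p).mul_mem hk' (hKsub p hp hk), ?_⟩
      simp only [smul_eq_mul] at hgk' ⊢
      rw [← mul_assoc, hgk']
    rw [h1, h2]
  refine ⟨K, hKcc, hKop, ?_⟩
  intro g x k hk
  by_cases h1 : (g, x) ∈ ⋃ p ∈ b', (p.1 • (Ks p : Set G)) ×ˢ ws p
  · exact step g x k hk h1
  · by_cases h2 : (g * k, x) ∈ ⋃ p ∈ b', (p.1 • (Ks p : Set G)) ×ˢ ws p
    · have h3 := step (g * k) x k⁻¹ (K.inv_mem hk) h2
      rw [mul_assoc, mul_inv_cancel, mul_one] at h3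
      exact h3.symm
    · have hΦg : Φ (g, x) = 0 := image_eq_zero_of_notMem_tsupport (fun hc => h1 (hb'cov hc))
      have hΦgk : Φ (g * k, x) = 0 :=
        image_eq_zero_of_notMem_tsupport (fun hc => h2 (hb'cov hc))
      rw [hΦg, hΦgk]

/-- A slice of a locally constant compactly supported function on `G × X`. -/
lemma slice_mem {X : Type*} [TopologicalSpace X] [T2Space X] {Φ : G × X → V}
    (h : Φ ∈ SmCc (G × X) V) (a : G) : (fun x => Φ (a, x)) ∈ SmCc X V := by
  refine ⟨h.1.comp_continuous (Continuous.prodMk_right a), ?_⟩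
  have himg : IsCompact (Prod.snd '' tsupport Φ) := h.2.image continuous_snd
  have hsub : tsupport (fun x => Φ (a, x)) ⊆ Prod.snd '' tsupport Φ := by
    refine closure_minimal ?_ himg.isClosed
    intro x hx
    exact ⟨(a, x), subset_closure hx, rfl⟩
  exact himg.of_isClosed_subset (isClosed_tsupport _) hsub

/-- Composition with a homeomorphism and a pointwise smooth twist preserves `SmCc`. -/
lemma smcc_twist {Y Z : Type*} [TopologicalSpace Y] [TopologicalSpace Z]
    (ρ : Representation ℂ G V) (hρ : SmoothRep ρ) (φ : Y ≃ₜ Z) {τ : Y → G}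
    (hτ : Continuous τ) {f : Z → V} (hf : f ∈ SmCc Z V) :
    (fun y => ρ (τ y) (f (φ y))) ∈ SmCc Y V := by
  constructor
  · rw [IsLocallyConstant.iff_exists_open]
    intro y₀
    have hfφ : IsLocallyConstant (fun y => f (φ y)) := hf.1.comp_continuous φ.continuous
    obtain ⟨U₁, hU₁o, hyU₁, hU₁⟩ := (IsLocallyConstant.iff_exists_open _).mp hfφ y₀
    obtain ⟨Uv, hUvo, hUv⟩ := hρ (f (φ y₀))
    refine ⟨U₁ ∩ τ ⁻¹' (τ y₀ • (Uv : Set G)), hU₁o.inter ((hUvo.smul (τ y₀)).preimage hτ),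
      ⟨hyU₁, ?_⟩, ?_⟩
    · exact Set.mem_preimage.mpr ⟨1, Uv.one_mem, mul_one (τ y₀)⟩
    · rintro y ⟨hy1, hy2⟩
      obtain ⟨u, hu, huy⟩ := hy2
      rw [hU₁ y hy1]
      simp only [smul_eq_mul] at huy
      rw [← huy, map_mul]
      have : ρ u (f (φ y₀)) = f (φ y₀) := hUv u hu
      simp only [Module.End.mul_apply]
      rw [this]
  · have hsub : tsupport (fun y => ρ (τ y) (f (φ y))) ⊆ ⇑φ ⁻¹' tsupport f := by
      refine closure_minimal ?_ ((isClosed_tsupport f).preimage φ.continuous)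
      intro y hy
      simp only [Function.mem_support] at hy
      refine Set.mem_preimage.mpr (subset_closure ?_)
      simp only [Function.mem_support]
      intro hzero
      rw [hzero] at hy
      simp at hy
    have hcomp : IsCompact (⇑φ ⁻¹' tsupport f) := by
      rw [← Homeomorph.image_symm]
      exact hf.2.image φ.symm.continuous
    exact hcomp.of_isClosed_subset (isClosed_tsupport _) hsub

/-- Indicator of a compact open subgroup times an `SmCc` function of the second variable. -/
lemma indicator_smcc {X : Type*} [TopologicalSpace X] {C : Set G} (hCc : IsCompact C)
    (hCo : IsOpen C) {F : X → V} (hF : F ∈ SmCc X V) :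
    (fun p : G × X => Set.indicator C (fun _ => F p.2) p.1) ∈ SmCc (G × X) V := by
  constructor
  · rw [IsLocallyConstant.iff_exists_open]
    rintro ⟨g₀, x₀⟩
    obtain ⟨U, hUo, hxU, hU⟩ := (IsLocallyConstant.iff_exists_open _).mp hF.1 x₀
    by_cases hg₀ : g₀ ∈ C
    · refine ⟨C ×ˢ U, hCo.prod hUo, ⟨hg₀, hxU⟩, ?_⟩
      rintro ⟨g, x⟩ ⟨hg, hx⟩
      simp only [Set.indicator_of_mem hg, Set.indicator_of_mem hg₀]
      exact hU x hx
    · refine ⟨Cᶜ ×ˢ Set.univ, (hCc.isClosed.isOpen_compl).prod isOpen_univ,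
        ⟨hg₀, Set.mem_univ _⟩, ?_⟩
      rintro ⟨g, x⟩ ⟨hg, -⟩
      simp only [Set.indicator_of_notMem hg, Set.indicator_of_notMem hg₀]
  · have hsub : tsupport (fun p : G × X => Set.indicator C (fun _ => F p.2) p.1)
        ⊆ C ×ˢ tsupport F := by
      refine closure_minimal ?_ (hCc.isClosed.prod (isClosed_tsupport F))
      rintro ⟨g, x⟩ hp
      simp only [Function.mem_support] at hp
      by_cases hg : g ∈ C
      · refine ⟨hg, subset_closure ?_⟩
        simp only [Function.mem_support]
        intro h0
        rw [Set.indicator_of_mem hg] at hp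
        exact hp h0
      · exact absurd (Set.indicator_of_notMem hg _) hp
    exact (hCc.prod hF.2).of_isClosed_subset (isClosed_tsupport _) hsub

variable [MeasurableSpace G] [BorelSpace G]

/-- The slice formula: the `smInt` of a slice, computed via coset representatives. -/
lemma slice_formula (μ : Measure G) [μ.IsHaarMeasure] {X : Type*}
    {Φ : G × X → V} {K : Subgroup G} (hKc : IsCompact (K : Set G)) (hKo : IsOpen (K : Set G))
    (hinv : ∀ (g : G) (x : X), ∀ k ∈ K, Φ (g * k, x) = Φ (g, x))
    {s : Finset G}
    (hs : ∀ i ∈ s, ∀ j ∈ s, (QuotientGroup.mk i : G ⧸ K) = QuotientGroup.mk j → i = j)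
    (hcov : Prod.fst '' Function.support Φ ⊆ ⋃ i ∈ s, i • (K : Set G)) (x : X) :
    smInt μ (fun g => Φ (g, x))
      = (((μ (K : Set G)).toReal : ℝ) : ℂ) • ∑ i ∈ s, Φ (i, x) := by
  refine smInt_coset μ hKc hKo hs ?_ ?_
  · intro i g hig
    have hk : i⁻¹ * g ∈ K := QuotientGroup.eq.mp hig
    have := hinv i x _ hk
    rwa [mul_inv_cancel_left] at this
  · intro g hg
    have hmem : g ∈ Prod.fst '' Function.support Φ := ⟨(g, x), hg, rfl⟩
    have := hcov hmem
    simp only [Set.mem_iUnion] at this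
    obtain ⟨i, hi, hgi⟩ := this
    exact ⟨i, hi, mem_coset_iff.mp hgi⟩

end TopLemmas

-- CHUNK3
section CoordsNoT2

variable {G : Type*} [Group G] [TopologicalSpace G] [IsTopologicalGroup G]

lemma continuous_partialProd {n : ℕ} (j : Fin (n + 1)) :
    Continuous (fun x : Fin n → G => Fin.partialProd x j) := by
  induction j using Fin.induction with
  | zero => simpa [Fin.partialProd_zero] using continuous_const
  | succ i ih =>
      simp only [Fin.partialProd_succ]
      exact ih.mul (continuous_apply i)

lemma pp_diff {n : ℕ} (h : Fin (n + 1) → G) (j : Fin (n + 1)) :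
    h 0 * Fin.partialProd (fun i : Fin n => (h i.castSucc)⁻¹ * h i.succ) j = h j := by
  induction j using Fin.induction with
  | zero => simp [Fin.partialProd_zero]
  | succ i ih =>
      rw [Fin.partialProd_succ, ← mul_assoc, ih, mul_inv_cancel_left]

lemma diff_pp {n : ℕ} (g : G) (x : Fin n → G) (i : Fin n) :
    (g * Fin.partialProd x i.castSucc)⁻¹ * (g * Fin.partialProd x i.succ) = x i := by
  rw [Fin.partialProd_succ]
  group

/-- The coordinate change `(g, x₁, …, x_n) ↦ (g, gx₁, gx₁x₂, …)`. -/
def coordHomeo (G : Type*) [Group G] [TopologicalSpace G] [IsTopologicalGroup G] (n : ℕ) :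
    (G × (Fin n → G)) ≃ₜ (Fin (n + 1) → G) where
  toFun p := fun j => p.1 * Fin.partialProd p.2 j
  invFun h := (h 0, fun i => (h i.castSucc)⁻¹ * h i.succ)
  left_inv p := by
    refine Prod.ext ?_ ?_
    · simp [Fin.partialProd_zero]
    · funext i
      exact diff_pp p.1 p.2 i
  right_inv h := by
    funext j
    exact pp_diff h j
  continuous_toFun := by
    exact continuous_pi fun j => (continuous_fst.mul
      ((continuous_partialProd j).comp continuous_snd))
  continuous_invFun := by
    refine Continuous.prodMk (continuous_apply 0) ?_
    exact continuous_pi fun i => ((continuous_apply i.castSucc).inv).mul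
      (continuous_apply i.succ)

end CoordsNoT2

section Coords

variable {G : Type*} [Group G] [TopologicalSpace G] [IsTopologicalGroup G] [T2Space G]
variable {V : Type*} [AddCommGroup V] [Module ℂ V]
variable (ρ : Representation ℂ G V) (n : ℕ)

/-- The twisted coordinate change sending `f` to `Φ_f(g, x) = ρ(g)⁻¹ f(g, gx₁, …)`. -/
def Lmap : ((Fin (n + 1) → G) → V) → (G × (Fin n → G)) → V :=
  fun f p => ρ p.1⁻¹ (f (fun j => p.1 * Fin.partialProd p.2 j))

/-- The inverse of `Lmap`. -/
def Mmap : ((G × (Fin n → G)) → V) → (Fin (n + 1) → G) → V :=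
  fun Φ h => ρ (h 0) (Φ (h 0, fun i => (h i.castSucc)⁻¹ * h i.succ))

/-- Left translation in the first variable. -/
def Amap {X : Type*} (g₀ : G) : ((G × X) → V) → (G × X) → V :=
  fun Φ p => Φ (g₀⁻¹ * p.1, p.2)

variable {ρ n}

lemma ML (f : (Fin (n + 1) → G) → V) : Mmap ρ n (Lmap ρ n f) = f := by
  funext h
  show ρ (h 0) (ρ (h 0)⁻¹ (f _)) = f h
  rw [← Module.End.mul_apply, ← map_mul, mul_inv_cancel, map_one, Module.End.one_apply]
  congr 1
  funext j
  exact pp_diff h j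

lemma LM (Φ : (G × (Fin n → G)) → V) : Lmap ρ n (Mmap ρ n Φ) = Φ := by
  funext p
  show ρ p.1⁻¹ (ρ ((fun j => p.1 * Fin.partialProd p.2 j) 0) (Φ _)) = Φ p
  simp only [Fin.partialProd_zero, mul_one]
  rw [← Module.End.mul_apply, ← map_mul, inv_mul_cancel, map_one, Module.End.one_apply]
  congr 1
  refine Prod.ext ?_ ?_
  · simp [Fin.partialProd_zero]
  · funext i
    exact diff_pp p.1 p.2 i

lemma L_inhAct (g₀ : G) (f : (Fin (n + 1) → G) → V) :
    Lmap ρ n (inhAct ρ g₀ f) = Amap g₀ (Lmap ρ n f) := by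
  funext p
  show ρ p.1⁻¹ (ρ g₀ (f fun i => g₀⁻¹ * (p.1 * Fin.partialProd p.2 i)))
    = ρ (g₀⁻¹ * p.1)⁻¹ (f fun j => g₀⁻¹ * p.1 * Fin.partialProd p.2 j)
  rw [← Module.End.mul_apply, ← map_mul]
  have h1 : p.1⁻¹ * g₀ = (g₀⁻¹ * p.1)⁻¹ := by group
  rw [h1]
  have h2 : (fun i => g₀⁻¹ * (p.1 * Fin.partialProd p.2 i))
      = (fun j => g₀⁻¹ * p.1 * Fin.partialProd p.2 j) := by
    funext j
    rw [mul_assoc]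
  rw [h2]

lemma M_Amap (g₀ : G) (Φ : (G × (Fin n → G)) → V) :
    Mmap ρ n (Amap g₀ Φ) = inhAct ρ g₀ (Mmap ρ n Φ) := by
  have h := L_inhAct (ρ := ρ) (n := n) g₀ (Mmap ρ n Φ)
  rw [LM] at h
  rw [← h, ML]

lemma M_sum {ι : Type*} (s : Finset ι) (Ψ : ι → (G × (Fin n → G)) → V) :
    Mmap ρ n (∑ i ∈ s, Ψ i) = ∑ i ∈ s, Mmap ρ n (Ψ i) := by
  funext h
  show ρ (h 0) ((∑ i ∈ s, Ψ i) _) = _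
  rw [Finset.sum_apply, map_sum, Finset.sum_apply]
  rfl

lemma M_sub (Ψ₁ Ψ₂ : (G × (Fin n → G)) → V) :
    Mmap ρ n (Ψ₁ - Ψ₂) = Mmap ρ n Ψ₁ - Mmap ρ n Ψ₂ := by
  funext h
  show ρ (h 0) ((Ψ₁ - Ψ₂) _) = _
  rw [Pi.sub_apply, map_sub]
  rfl

lemma L_add (f₁ f₂ : (Fin (n + 1) → G) → V) :
    Lmap ρ n (f₁ + f₂) = Lmap ρ n f₁ + Lmap ρ n f₂ := by
  funext p
  show ρ p.1⁻¹ ((f₁ + f₂) _) = _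
  rw [Pi.add_apply, map_add]
  rfl

lemma L_smul (a : ℂ) (f : (Fin (n + 1) → G) → V) :
    Lmap ρ n (a • f) = a • Lmap ρ n f := by
  funext p
  show ρ p.1⁻¹ ((a • f) _) = _
  rw [Pi.smul_apply, LinearMap.map_smul]
  rfl

lemma L_sub (f₁ f₂ : (Fin (n + 1) → G) → V) :
    Lmap ρ n (f₁ - f₂) = Lmap ρ n f₁ - Lmap ρ n f₂ := by
  funext p
  show ρ p.1⁻¹ ((f₁ - f₂) _) = _
  rw [Pi.sub_apply, map_sub]
  rfl

lemma L_mem (hρ : SmoothRep ρ) {f : (Fin (n + 1) → G) → V} (hf : f ∈ SmCc (Fin (n + 1) → G) V) :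
    Lmap ρ n f ∈ SmCc (G × (Fin n → G)) V := by
  have := smcc_twist ρ hρ (coordHomeo G n) (continuous_fst.inv) hf
  exact this

lemma M_mem (hρ : SmoothRep ρ) {Φ : (G × (Fin n → G)) → V} (hΦ : Φ ∈ SmCc (G × (Fin n → G)) V) :
    Mmap ρ n Φ ∈ SmCc (Fin (n + 1) → G) V := by
  have := smcc_twist ρ hρ (coordHomeo G n).symm (continuous_apply (0 : Fin (n + 1))) hΦ
  exact this

lemma inhAct_mem (hρ : SmoothRep ρ) (g : G) {f : (Fin (n + 1) → G) → V}
    (hf : f ∈ SmCc (Fin (n + 1) → G) V) : inhAct ρ g f ∈ SmCc (Fin (n + 1) → G) V := by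
  have := smcc_twist ρ hρ
    (Homeomorph.piCongrRight (fun _ : Fin (n + 1) => Homeomorph.mulLeft g⁻¹))
    (continuous_const (y := g)) hf
  exact this

lemma Amap_mem {X : Type*} [TopologicalSpace X] (g₀ : G) {Φ : (G × X) → V}
    (hΦ : Φ ∈ SmCc (G × X) V) : Amap g₀ Φ ∈ SmCc (G × X) V := by
  have hφ : Amap (V := V) g₀ Φ
      = Φ ∘ ⇑((Homeomorph.mulLeft g₀⁻¹).prodCongr (Homeomorph.refl X)) := rfl
  rw [hφ]
  exact ⟨hΦ.1.comp_continuous (Homeomorph.continuous _), hΦ.2.comp_homeomorph _⟩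

end Coords

end AuxLemmas

/-- `T_n` is surjective and its kernel is the span of the elements
`g·f − f`. -/
theorem Tn_surjective_and_kernel
    (G : Type*) [Group G] [TopologicalSpace G] [IsTopologicalGroup G] [T2Space G]
    [LocallyCompactSpace G] [TotallyDisconnectedSpace G] [SigmaCompactSpace G]
    (hG : HasCompactOpenBasis G)
    [MeasurableSpace G] [BorelSpace G] (μ : Measure G) [μ.IsHaarMeasure]
    (V : Type*) [AddCommGroup V] [Module ℂ V]
    (ρ : Representation ℂ G V) (hρ : SmoothRep ρ)
    (n : ℕ) (hn : 1 ≤ n) :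
    -- `T_n` maps `C_c^∞(G^{n+1}, V)` into `C_c^∞(G^n, V)`
    (∀ f ∈ SmCc (Fin (n + 1) → G) V, Tnmap μ ρ n f ∈ SmCc (Fin n → G) V) ∧
    -- `T_n` is surjective
    (∀ F ∈ SmCc (Fin n → G) V, ∃ f ∈ SmCc (Fin (n + 1) → G) V, Tnmap μ ρ n f = F) ∧
    -- its kernel is the span of the elements `g·f − f`
    (∀ f ∈ SmCc (Fin (n + 1) → G) V,
      (Tnmap μ ρ n f = 0 ↔ f ∈ Submodule.span ℂ
        {h : (Fin (n + 1) → G) → V | ∃ (g : G) (f' : (Fin (n + 1) → G) → V),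
          f' ∈ SmCc (Fin (n + 1) → G) V ∧ h = inhAct ρ g f' - f'})) := by
  classical
  have tn_eq : ∀ (f : (Fin (n + 1) → G) → V) (x : Fin n → G),
      Tnmap μ ρ n f x = smInt μ (fun g => Lmap ρ n f (g, x)) := fun f x => rfl
  have hc_ne : ∀ K : Subgroup G, IsCompact (K : Set G) → IsOpen (K : Set G) →
      (((μ (K : Set G)).toReal : ℝ) : ℂ) ≠ 0 := by
    intro K hKc hKo
    have h1 : μ (K : Set G) ≠ 0 := (hKo.measure_pos μ ⟨1, K.one_mem⟩).ne'
    have h2 : μ (K : Set G) ≠ ⊤ := hKc.measure_lt_top.ne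
    exact_mod_cast ENNReal.toReal_ne_zero.mpr ⟨h1, h2⟩
  have getData : ∀ Φ : G × (Fin n → G) → V, Φ ∈ SmCc (G × (Fin n → G)) V →
      ∃ (K : Subgroup G) (s : Finset G), IsCompact (K : Set G) ∧ IsOpen (K : Set G) ∧
        (∀ (g : G) (x : Fin n → G), ∀ k ∈ K, Φ (g * k, x) = Φ (g, x)) ∧
        (∀ i ∈ s, ∀ j ∈ s, (QuotientGroup.mk i : G ⧸ K) = QuotientGroup.mk j → i = j) ∧
        Prod.fst '' Function.support Φ ⊆ ⋃ i ∈ s, i • (K : Set G) := by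
    intro Φ hΦ
    obtain ⟨K, hKc, hKo, hKinv⟩ := box_lemma hG hΦ.1 hΦ.2
    obtain ⟨s, hs, hscov⟩ := compact_coset_cover hKo (hΦ.2.image continuous_fst)
    exact ⟨K, s, hKc, hKo, hKinv, hs,
      (Set.image_mono (subset_tsupport Φ)).trans hscov⟩
  -- additivity of the slice integral
  have tn_add : ∀ Φ₁ Φ₂ : G × (Fin n → G) → V, Φ₁ ∈ SmCc (G × (Fin n → G)) V →
      Φ₂ ∈ SmCc (G × (Fin n → G)) V → ∀ x,
      smInt μ (fun g => Φ₁ (g, x) + Φ₂ (g, x))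
        = smInt μ (fun g => Φ₁ (g, x)) + smInt μ (fun g => Φ₂ (g, x)) := by
    intro Φ₁ Φ₂ h₁ h₂ x
    obtain ⟨K₁, hK₁c, hK₁o, hK₁inv⟩ := box_lemma hG h₁.1 h₁.2
    obtain ⟨K₂, hK₂c, hK₂o, hK₂inv⟩ := box_lemma hG h₂.1 h₂.2
    have hKset : ((K₁ ⊓ K₂ : Subgroup G) : Set G) = (K₁ : Set G) ∩ (K₂ : Set G) := rfl
    have hKc : IsCompact ((K₁ ⊓ K₂ : Subgroup G) : Set G) := by
      refine hK₁c.of_isClosed_subset ?_ ?_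
      · rw [hKset]; exact hK₁c.isClosed.inter hK₂c.isClosed
      · rw [hKset]; exact Set.inter_subset_left
    have hKo : IsOpen ((K₁ ⊓ K₂ : Subgroup G) : Set G) := by
      rw [hKset]; exact hK₁o.inter hK₂o
    have hinv₁ : ∀ (g : G) (x : Fin n → G), ∀ k ∈ K₁ ⊓ K₂, Φ₁ (g * k, x) = Φ₁ (g, x) :=
      fun g x k hk => hK₁inv g x k (Subgroup.mem_inf.mp hk).1
    have hinv₂ : ∀ (g : G) (x : Fin n → G), ∀ k ∈ K₁ ⊓ K₂, Φ₂ (g * k, x) = Φ₂ (g, x) :=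
      fun g x k hk => hK₂inv g x k (Subgroup.mem_inf.mp hk).2
    obtain ⟨s₁, hs₁, hcov₁⟩ := compact_coset_cover (K := K₁ ⊓ K₂) hKo
      (h₁.2.image continuous_fst)
    obtain ⟨s₂, hs₂, hcov₂⟩ := compact_coset_cover (K := K₁ ⊓ K₂) hKo
      (h₂.2.image continuous_fst)
    obtain ⟨s, hs, hscov⟩ := coset_extract (K₁ ⊓ K₂) (s₁ ∪ s₂)
    have hsub₁ : Prod.fst '' Function.support Φ₁
        ⊆ ⋃ i ∈ s, i • ((K₁ ⊓ K₂ : Subgroup G) : Set G) := by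
      refine ((Set.image_mono (subset_tsupport Φ₁)).trans hcov₁).trans ?_
      refine Set.Subset.trans ?_ hscov
      intro g hg
      simp only [Set.mem_iUnion] at hg ⊢
      obtain ⟨i, hi, hgi⟩ := hg
      exact ⟨i, Finset.mem_union_left _ hi, hgi⟩
    have hsub₂ : Prod.fst '' Function.support Φ₂
        ⊆ ⋃ i ∈ s, i • ((K₁ ⊓ K₂ : Subgroup G) : Set G) := by
      refine ((Set.image_mono (subset_tsupport Φ₂)).trans hcov₂).trans ?_
      refine Set.Subset.trans ?_ hscov
      intro g hg
      simp only [Set.mem_iUnion] at hg ⊢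
      obtain ⟨i, hi, hgi⟩ := hg
      exact ⟨i, Finset.mem_union_right _ hi, hgi⟩
    have hinv₁₂ : ∀ (g : G) (x : Fin n → G), ∀ k ∈ K₁ ⊓ K₂,
        (fun p : G × (Fin n → G) => Φ₁ p + Φ₂ p) (g * k, x)
          = (fun p : G × (Fin n → G) => Φ₁ p + Φ₂ p) (g, x) := by
      intro g x k hk
      simp only
      rw [hinv₁ g x k hk, hinv₂ g x k hk]
    have hsub₁₂ : Prod.fst '' Function.support (fun p : G × (Fin n → G) => Φ₁ p + Φ₂ p)
        ⊆ ⋃ i ∈ s, i • ((K₁ ⊓ K₂ : Subgroup G) : Set G) := by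
      rintro g ⟨p, hp, rfl⟩
      simp only [Function.mem_support] at hp
      by_cases h : Φ₁ p = 0
      · have h2 : Φ₂ p ≠ 0 := fun hc => hp (by rw [h, hc, add_zero])
        exact hsub₂ ⟨p, h2, rfl⟩
      · exact hsub₁ ⟨p, h, rfl⟩
    have e₁ := slice_formula μ hKc hKo hinv₁ hs hsub₁ x
    have e₂ := slice_formula μ hKc hKo hinv₂ hs hsub₂ x
    have e₁₂ := slice_formula μ hKc hKo hinv₁₂ hs hsub₁₂ x
    simp only at e₁₂
    rw [e₁, e₂, e₁₂, ← smul_add, ← Finset.sum_add_distrib]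
  -- subtraction
  have tn_sub : ∀ Ψ₁ Ψ₂ : G × (Fin n → G) → V, Ψ₁ ∈ SmCc (G × (Fin n → G)) V →
      Ψ₂ ∈ SmCc (G × (Fin n → G)) V → ∀ x,
      smInt μ (fun g => Ψ₁ (g, x) - Ψ₂ (g, x))
        = smInt μ (fun g => Ψ₁ (g, x)) - smInt μ (fun g => Ψ₂ (g, x)) := by
    intro Ψ₁ Ψ₂ h₁ h₂ x
    have hsubm : Ψ₁ - Ψ₂ ∈ SmCc (G × (Fin n → G)) V := Submodule.sub_mem _ h₁ h₂
    have h := tn_add (Ψ₁ - Ψ₂) Ψ₂ hsubm h₂ x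
    have e : (fun g => (Ψ₁ - Ψ₂) (g, x) + Ψ₂ (g, x)) = fun g => Ψ₁ (g, x) := by
      funext g
      simp
    rw [e] at h
    have e2 : (fun g => (Ψ₁ - Ψ₂) (g, x)) = fun g => Ψ₁ (g, x) - Ψ₂ (g, x) := rfl
    rw [e2] at h
    exact eq_sub_of_add_eq h.symm
  -- generators integrate to zero
  have tn_gen : ∀ (g₀ : G) (Φ' : G × (Fin n → G) → V), Φ' ∈ SmCc (G × (Fin n → G)) V →
      ∀ x, smInt μ (fun g => (Amap g₀ Φ' - Φ') (g, x)) = 0 := by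
    intro g₀ Φ' hΦ' x
    have hA : Amap (V := V) g₀ Φ' ∈ SmCc (G × (Fin n → G)) V := Amap_mem g₀ hΦ'
    have e : (fun g => (Amap g₀ Φ' - Φ') (g, x))
        = fun g => Amap g₀ Φ' (g, x) - Φ' (g, x) := rfl
    rw [e, tn_sub _ _ hA hΦ' x]
    have ht : smInt μ (fun g => Amap g₀ Φ' (g, x)) = smInt μ (fun g => Φ' (g, x)) :=
      smInt_translate μ g₀⁻¹ (fun g => Φ' (g, x))
    rw [ht, sub_self]
  -- scalar multiples
  have tn_smul : ∀ Φ : G × (Fin n → G) → V, Φ ∈ SmCc (G × (Fin n → G)) V →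
      ∀ (a : ℂ) (x : Fin n → G),
      smInt μ (fun g => a • Φ (g, x)) = a • smInt μ (fun g => Φ (g, x)) := by
    intro Φ hΦ a x
    obtain ⟨K, s, hKc, hKo, hinv, hs, hcov⟩ := getData Φ hΦ
    have e₁ := slice_formula μ hKc hKo hinv hs hcov x
    have hinv' : ∀ (g : G) (x : Fin n → G), ∀ k ∈ K,
        (fun p : G × (Fin n → G) => a • Φ p) (g * k, x)
          = (fun p : G × (Fin n → G) => a • Φ p) (g, x) := by
      intro g x k hk
      simp only
      rw [hinv g x k hk]
    have hcov' : Prod.fst '' Function.support (fun p : G × (Fin n → G) => a • Φ p)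
        ⊆ ⋃ i ∈ s, i • (K : Set G) := by
      rintro g ⟨p, hp, rfl⟩
      refine hcov ⟨p, ?_, rfl⟩
      simp only [Function.mem_support] at hp ⊢
      intro h0
      exact hp (by rw [h0, smul_zero])
    have e₂ := slice_formula μ hKc hKo hinv' hs hcov' x
    simp only at e₂
    rw [e₂, e₁, smul_comm a]
    congr 1
    exact (Finset.smul_sum).symm
  -- direction : span → kernel
  have span_dir : ∀ f ∈ Submodule.span ℂ
      {h : (Fin (n + 1) → G) → V | ∃ (g : G) (f' : (Fin (n + 1) → G) → V),
        f' ∈ SmCc (Fin (n + 1) → G) V ∧ h = inhAct ρ g f' - f'},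
      Tnmap μ ρ n f = 0 ∧ f ∈ SmCc (Fin (n + 1) → G) V := by
    intro f hf
    induction hf using Submodule.span_induction with
    | mem x hx =>
        obtain ⟨g₀, f', hf', rfl⟩ := hx
        constructor
        · funext z
          have hL : Lmap ρ n (inhAct ρ g₀ f' - f')
              = Amap g₀ (Lmap ρ n f') - Lmap ρ n f' := by
            rw [L_sub, L_inhAct]
          rw [tn_eq, hL]
          exact tn_gen g₀ (Lmap ρ n f') (L_mem hρ hf') z
        · exact Submodule.sub_mem _ (inhAct_mem hρ g₀ hf') hf'
    | zero =>
        constructor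
        · funext z
          have e : (fun g => Lmap ρ n (0 : (Fin (n + 1) → G) → V) (g, z))
              = fun _ : G => (0 : V) := by
            funext g
            show ρ g⁻¹ ((0 : (Fin (n + 1) → G) → V) _) = 0
            simp
          rw [tn_eq, e, smInt_zero μ]
          rfl
        · exact Submodule.zero_mem _
    | add x y hx hy ihx ihy =>
        refine ⟨?_, Submodule.add_mem _ ihx.2 ihy.2⟩
        funext z
        have e : (fun g => Lmap ρ n (x + y) (g, z))
            = fun g => Lmap ρ n x (g, z) + Lmap ρ n y (g, z) := by
          rw [L_add]
          rfl
        rw [tn_eq, e, tn_add _ _ (L_mem hρ ihx.2) (L_mem hρ ihy.2) z]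
        have hx0 : smInt μ (fun g => Lmap ρ n x (g, z)) = 0 := by
          rw [← tn_eq]
          exact congrFun ihx.1 z
        have hy0 : smInt μ (fun g => Lmap ρ n y (g, z)) = 0 := by
          rw [← tn_eq]
          exact congrFun ihy.1 z
        rw [hx0, hy0, add_zero]
        rfl
    | smul a x hx ih =>
        refine ⟨?_, Submodule.smul_mem _ a ih.2⟩
        funext z
        have e : (fun g => Lmap ρ n (a • x) (g, z))
            = fun g => a • Lmap ρ n x (g, z) := by
          rw [L_smul]
          rfl
        have hsm := tn_smul (Lmap ρ n x) (L_mem hρ ih.2) a z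
        rw [tn_eq, e, hsm]
        have hx0 : smInt μ (fun g => Lmap ρ n x (g, z)) = 0 := by
          rw [← tn_eq]
          exact congrFun ih.1 z
        rw [hx0, smul_zero]
        rfl
  -- part 1
  have part1 : ∀ f ∈ SmCc (Fin (n + 1) → G) V, Tnmap μ ρ n f ∈ SmCc (Fin n → G) V := by
    intro f hf
    obtain ⟨K, s, hKc, hKo, hinv, hs, hcov⟩ := getData (Lmap ρ n f) (L_mem hρ hf)
    have heq : Tnmap μ ρ n f
        = ∑ i ∈ s, (((μ (K : Set G)).toReal : ℝ) : ℂ) • (fun x => Lmap ρ n f (i, x)) := by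
      funext x
      rw [tn_eq, slice_formula μ hKc hKo hinv hs hcov x, Finset.sum_apply, Finset.smul_sum]
      exact Finset.sum_congr rfl fun i _ => rfl
    rw [heq]
    exact Submodule.sum_mem _ fun i _ =>
      Submodule.smul_mem _ _ (slice_mem (L_mem hρ hf) i)
  -- part 2 : surjectivity
  have part2 : ∀ F ∈ SmCc (Fin n → G) V,
      ∃ f ∈ SmCc (Fin (n + 1) → G) V, Tnmap μ ρ n f = F := by
    intro F hF
    obtain ⟨K₀, hK₀c, hK₀o, -⟩ := hG Set.univ Filter.univ_mem
    have hc0 : (((μ (K₀ : Set G)).toReal : ℝ) : ℂ) ≠ 0 := hc_ne K₀ hK₀c hK₀o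
    set c : ℂ := (((μ (K₀ : Set G)).toReal : ℝ) : ℂ) with hc
    set Φ : G × (Fin n → G) → V :=
      fun p => Set.indicator (K₀ : Set G) (fun _ => c⁻¹ • F p.2) p.1 with hΦdef
    have hF' : (fun x => c⁻¹ • F x) ∈ SmCc (Fin n → G) V := Submodule.smul_mem _ _ hF
    have hΦmem : Φ ∈ SmCc (G × (Fin n → G)) V := indicator_smcc hK₀c hK₀o hF'
    refine ⟨Mmap ρ n Φ, M_mem hρ hΦmem, ?_⟩
    funext x
    rw [tn_eq, LM Φ]
    have hinv : ∀ (g : G) (y : Fin n → G), ∀ k ∈ K₀, Φ (g * k, y) = Φ (g, y) := by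
      intro g y k hk
      show Set.indicator _ _ (g * k) = Set.indicator _ _ g
      by_cases hg : g ∈ K₀
      · rw [Set.indicator_of_mem ((Subgroup.mul_mem_cancel_right K₀ hk).mpr hg),
          Set.indicator_of_mem hg]
      · rw [Set.indicator_of_notMem
          (fun h => hg ((Subgroup.mul_mem_cancel_right K₀ hk).mp h)),
          Set.indicator_of_notMem hg]
    have hs : ∀ i ∈ ({1} : Finset G), ∀ j ∈ ({1} : Finset G),
        (QuotientGroup.mk i : G ⧸ K₀) = QuotientGroup.mk j → i = j := by
      intro i hi j hj _
      rw [Finset.mem_singleton.mp hi, Finset.mem_singleton.mp hj]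
    have hcov : Prod.fst '' Function.support Φ
        ⊆ ⋃ i ∈ ({1} : Finset G), i • (K₀ : Set G) := by
      rintro g ⟨p, hp, rfl⟩
      simp only [Set.mem_iUnion]
      refine ⟨1, Finset.mem_singleton_self 1, ?_⟩
      rw [one_smul]
      by_contra hg
      exact hp (Set.indicator_of_notMem hg _)
    rw [slice_formula μ hK₀c hK₀o hinv hs hcov x, Finset.sum_singleton]
    show c • Φ (1, x) = F x
    have h1K : (1 : G) ∈ (K₀ : Set G) := K₀.one_mem
    show c • Set.indicator (K₀ : Set G) (fun _ => c⁻¹ • F x) 1 = F x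
    rw [Set.indicator_of_mem h1K, smul_smul, mul_inv_cancel₀ hc0, one_smul]
  -- part 3 forward : kernel → span
  have part3fwd : ∀ f ∈ SmCc (Fin (n + 1) → G) V, Tnmap μ ρ n f = 0 →
      f ∈ Submodule.span ℂ
        {h : (Fin (n + 1) → G) → V | ∃ (g : G) (f' : (Fin (n + 1) → G) → V),
          f' ∈ SmCc (Fin (n + 1) → G) V ∧ h = inhAct ρ g f' - f'} := by
    intro f hf h0
    obtain ⟨K, s, hKc, hKo, hinv, hs, hcov⟩ := getData (Lmap ρ n f) (L_mem hρ hf)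
    have hsum : ∀ x, ∑ i ∈ s, Lmap ρ n f (i, x) = 0 := by
      intro x
      have h1 : smInt μ (fun g => Lmap ρ n f (g, x)) = 0 := by
        rw [← tn_eq]
        exact congrFun h0 x
      rw [slice_formula μ hKc hKo hinv hs hcov x] at h1
      rcases smul_eq_zero.mp h1 with h | h
      · exact absurd h (hc_ne K hKc hKo)
      · exact h
    set Ψ : G → (G × (Fin n → G)) → V :=
      fun i p => Set.indicator (K : Set G) (fun _ => Lmap ρ n f (i, p.2)) p.1 with hΨdef
    have hΨmem : ∀ i, Ψ i ∈ SmCc (G × (Fin n → G)) V :=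
      fun i => indicator_smcc hKc hKo (slice_mem (L_mem hρ hf) i)
    have hdecomp : Lmap ρ n f = ∑ i ∈ s, Amap i (Ψ i) := by
      funext p
      rw [Finset.sum_apply]
      by_cases hp : ∃ j ∈ s, (QuotientGroup.mk j : G ⧸ K) = QuotientGroup.mk p.1
      · obtain ⟨j, hjs, hj⟩ := hp
        rw [Finset.sum_eq_single j _ (fun hns => absurd hjs hns)]
        · show Lmap ρ n f p = Set.indicator (K : Set G) (fun _ => Lmap ρ n f (j, p.2)) (j⁻¹ * p.1)
          have hjK : j⁻¹ * p.1 ∈ K := QuotientGroup.eq.mp hj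
          rw [Set.indicator_of_mem hjK]
          have h2 := hinv j p.2 (j⁻¹ * p.1) hjK
          rw [mul_inv_cancel_left] at h2
          rw [← h2]
        · intro i his hij
          show Set.indicator (K : Set G) (fun _ => Lmap ρ n f (i, p.2)) (i⁻¹ * p.1) = 0
          refine Set.indicator_of_notMem (fun hiK => hij ?_) _
          exact hs i his j hjs ((QuotientGroup.eq.mpr hiK).trans hj.symm)
      · have hΦp : Lmap ρ n f p = 0 := by
          by_contra hne
          have hmem : p.1 ∈ Prod.fst '' Function.support (Lmap ρ n f) := ⟨p, hne, rfl⟩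
          have h3 := hcov hmem
          simp only [Set.mem_iUnion] at h3
          obtain ⟨i, hi, hgi⟩ := h3
          exact hp ⟨i, hi, mem_coset_iff.mp hgi⟩
        rw [hΦp]
        symm
        refine Finset.sum_eq_zero fun i his => ?_
        show Set.indicator (K : Set G) (fun _ => Lmap ρ n f (i, p.2)) (i⁻¹ * p.1) = 0
        exact Set.indicator_of_notMem
          (fun hiK => hp ⟨i, his, QuotientGroup.eq.mpr hiK⟩) _
    have hsumΨ : ∑ i ∈ s, Ψ i = 0 := by
      funext p
      rw [Finset.sum_apply]
      by_cases hp1 : p.1 ∈ (K : Set G)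
      · have h4 : ∀ i ∈ s, Ψ i p = Lmap ρ n f (i, p.2) :=
          fun i _ => Set.indicator_of_mem hp1 _
        rw [Finset.sum_congr rfl h4, hsum p.2]
        rfl
      · have h4 : ∀ i ∈ s, Ψ i p = 0 := fun i _ => Set.indicator_of_notMem hp1 _
        rw [Finset.sum_congr rfl h4, Finset.sum_const_zero]
        rfl
    have hΦ2 : Lmap ρ n f = ∑ i ∈ s, (Amap i (Ψ i) - Ψ i) := by
      rw [Finset.sum_sub_distrib, hsumΨ, sub_zero, ← hdecomp]
    have hf_eq : f = ∑ i ∈ s, (inhAct ρ i (Mmap ρ n (Ψ i)) - Mmap ρ n (Ψ i)) := by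
      have h1 : f = Mmap ρ n (Lmap ρ n f) := (ML f).symm
      rw [h1, hΦ2, M_sum]
      refine Finset.sum_congr rfl fun i _ => ?_
      rw [M_sub, M_Amap]
    rw [hf_eq]
    refine Submodule.sum_mem _ fun i _ => ?_
    exact Submodule.subset_span ⟨i, Mmap ρ n (Ψ i), M_mem hρ (hΨmem i), rfl⟩
  exact ⟨part1, part2, fun f hf =>
    ⟨part3fwd f hf, fun hmem => (span_dir f hmem).1⟩⟩
end
end

section
/- Let G be an l-group with left Haar measure dg and W a complex vector space. If φ ∈ C_c^∞(G, W) satisfies ∫_G φ(g) dg = 0, then φ is a finite linear combination of elements of the form L_gψ − ψ with g ∈ G and ψ ∈ C_c^∞(G, W), where (L_gψ)(x) = ψ(g^{-1}x). -/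
open MeasureTheory
open scoped Pointwise

noncomputable section

lemma exists_invariant_compact_open {G : Type*} [Group G] [TopologicalSpace G]
    [IsTopologicalGroup G] {W : Type*} [AddCommGroup W] [Module ℂ W]
    (hG : HasCompactOpenBasis G)
    (φ : G → W) (hlc : IsLocallyConstant φ) (hcs : HasCompactSupport φ) :
    ∃ K : Subgroup G, IsCompact (K : Set G) ∧ IsOpen (K : Set G) ∧
      ∀ x : G, ∀ k ∈ K, φ (x * k) = φ x := by
  have hV : ∀ x : G, ((fun y => x * y) ⁻¹' (φ ⁻¹' {φ x})) ∈ nhds (1 : G) := by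
    intro x
    have hopen : IsOpen (φ ⁻¹' {φ x}) := hlc {φ x}
    exact (hopen.preimage (continuous_const.mul continuous_id)).mem_nhds (by simp)
  choose Kx hKxc hKxo hKxsub using fun x => hG _ (hV x)
  have key : ∀ y : G, ∀ k ∈ Kx y, φ (y * k) = φ y := fun y k hk => hKxsub y hk
  set D : G → Set G := fun y => (fun z => y⁻¹ * z) ⁻¹' (Kx y : Set G) with hD
  have hDopen : ∀ y, IsOpen (D y) := fun y =>
    (hKxo y).preimage (continuous_const.mul continuous_id)
  have hcover : tsupport φ ⊆ ⋃ y ∈ tsupport φ, D y := fun x hx =>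
    Set.mem_biUnion hx (by simp [hD, Subgroup.one_mem])
  obtain ⟨F, hFsub, hFfin, hFcov⟩ :=
    hcs.elim_finite_subcover_image (fun y _ => hDopen y) hcover
  obtain ⟨K0, hK0c, hK0o, -⟩ := hG Set.univ Filter.univ_mem
  haveI := hFfin.to_subtype
  set K : Subgroup G := K0 ⊓ ⨅ y : F, Kx y with hK
  have hKsetsub : (K : Set G) ⊆ (K0 : Set G) := fun z hz => (Subgroup.mem_inf.mp hz).1
  have hKle : ∀ y : F, K ≤ Kx y := fun y => le_trans inf_le_right (iInf_le _ y)
  have hKopen : IsOpen (K : Set G) := by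
    have heq : (K : Set G) = (K0 : Set G) ∩ ⋂ y : F, (Kx y : Set G) := by
      rw [hK, Subgroup.coe_inf, Subgroup.coe_iInf]
    rw [heq]
    exact hK0o.inter (isOpen_iInter_of_finite fun y => hKxo _)
  have hKcomp : IsCompact (K : Set G) :=
    hK0c.of_isClosed_subset (K.isClosed_of_isOpen hKopen) hKsetsub
  refine ⟨K, hKcomp, hKopen, ?_⟩
  have main : ∀ x : G, (∃ y ∈ F, x ∈ D y) → ∀ k ∈ K, φ (x * k) = φ x := by
    rintro x ⟨y, hyF, hxy⟩ k hk
    have h1 : y⁻¹ * x ∈ Kx y := hxy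
    have hky : k ∈ Kx y := hKle ⟨y, hyF⟩ hk
    have h2 : φ (y * (y⁻¹ * x)) = φ y := key y _ h1
    have h3 : φ (y * (y⁻¹ * x * k)) = φ y := key y _ (mul_mem h1 hky)
    rw [mul_inv_cancel_left] at h2
    rw [← mul_assoc, mul_inv_cancel_left] at h3
    rw [h3, h2]
  intro x k hk
  by_cases h1 : ∃ y ∈ F, x ∈ D y
  · exact main x h1 k hk
  by_cases h2 : ∃ y ∈ F, x * k ∈ D y
  · have := main (x * k) h2 k⁻¹ (inv_mem hk)
    rw [mul_assoc, mul_inv_cancel, mul_one] at this; exact this.symm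
  · have hout : ∀ z : G, ¬(∃ y ∈ F, z ∈ D y) → φ z = 0 := by
      intro z hz
      by_contra h
      have hzt : z ∈ tsupport φ := subset_tsupport φ (by simpa using h)
      obtain ⟨y, hyF, hzy⟩ := Set.mem_iUnion₂.mp (hFcov hzt)
      exact hz ⟨y, hyF, hzy⟩
    rw [hout _ h1, hout _ h2]


/-- If `φ ∈ C_c^∞(G, W)` has vanishing integral with respect to a left Haar
measure, then `φ` is a finite linear combination of elements `L_gψ − ψ`. -/
theorem integral_zero_mem_span_translates
    (G : Type*) [Group G] [TopologicalSpace G] [IsTopologicalGroup G] [T2Space G]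
    [LocallyCompactSpace G] [TotallyDisconnectedSpace G] [SigmaCompactSpace G]
    (hG : HasCompactOpenBasis G)
    [MeasurableSpace G] [BorelSpace G] (μ : Measure G) [μ.IsHaarMeasure]
    (W : Type*) [AddCommGroup W] [Module ℂ W]
    (φ : G → W) (hφ : φ ∈ SmCc G W) (hint : smInt μ φ = 0) :
    φ ∈ Submodule.span ℂ
      {h : G → W | ∃ (g : G) (ψ : G → W), ψ ∈ SmCc G W ∧
        h = (fun x => ψ (g⁻¹ * x)) - ψ} := by
  classical
  letI : DecidableEq W := Classical.decEq W
  obtain ⟨hlc, hcs⟩ := hφ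
  obtain ⟨K, hKcomp, hKopen, hinv⟩ := exists_invariant_compact_open hG φ hlc hcs
  set C : G → Set G := fun g => (fun x => g⁻¹ * x) ⁻¹' (K : Set G) with hCdef
  have hCopen : ∀ g, IsOpen (C g) := fun g =>
    hKopen.preimage (continuous_const.mul continuous_id)
  have hCval : ∀ g x, x ∈ C g → φ x = φ g := by
    intro g x hx
    have := hinv g (g⁻¹ * x) hx
    rwa [mul_inv_cancel_left] at this
  have hCq : ∀ g x, x ∈ C g → (x : G ⧸ K) = (g : G ⧸ K) :=
    fun g x hx => (QuotientGroup.eq.mpr hx).symm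
  have hcover : tsupport φ ⊆ ⋃ t ∈ tsupport φ, C t := fun x hx =>
    Set.mem_biUnion hx (by simp [hCdef, Subgroup.one_mem])
  obtain ⟨T, hTsub, hTfin, hTcov⟩ :=
    hcs.elim_finite_subcover_image (fun t _ => hCopen t) hcover
  letI : DecidableEq (G ⧸ K) := Classical.decEq _
  set S : Finset G :=
    (hTfin.toFinset.image (QuotientGroup.mk : G → G ⧸ K)).image Quotient.out with hSdef
  have hinj : ∀ g ∈ S, ∀ g' ∈ S, (g : G ⧸ K) = (g' : G ⧸ K) → g = g' := by
    intro g hg g' hg' h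
    obtain ⟨q, -, rfl⟩ := Finset.mem_image.mp hg
    obtain ⟨q', -, rfl⟩ := Finset.mem_image.mp hg'
    rw [QuotientGroup.out_eq', QuotientGroup.out_eq'] at h
    rw [h]
  have hcov2 : ∀ x ∈ tsupport φ, ∃ g ∈ S, x ∈ C g := by
    intro x hx
    obtain ⟨t, htT, hxt⟩ := Set.mem_iUnion₂.mp (hTcov hx)
    refine ⟨((t : G ⧸ K)).out, ?_, ?_⟩
    · exact Finset.mem_image_of_mem _
        (Finset.mem_image_of_mem _ (hTfin.mem_toFinset.mpr htT))
    · have h1 : (x : G ⧸ K) = (t : G ⧸ K) := hCq t x hxt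
      have h2 : ((((t : G ⧸ K)).out : G) : G ⧸ K) = (t : G ⧸ K) := QuotientGroup.out_eq' _
      exact QuotientGroup.eq.mp (h2.trans h1.symm)
  have hdisj : ∀ g ∈ S, ∀ g' ∈ S, g ≠ g' → ∀ x, x ∈ C g → x ∈ C g' → False := by
    intro g hg g' hg' hne x hx hx'
    exact hne (hinj g hg g' hg' ((hCq g x hx).symm.trans (hCq g' x hx')))
  have hrep : ∀ x, φ x = ∑ g ∈ S, Set.indicator (C g) (fun _ => φ g) x := by
    intro x
    by_cases hx : ∃ g ∈ S, x ∈ C g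
    · obtain ⟨g, hgS, hgx⟩ := hx
      rw [Finset.sum_eq_single_of_mem g hgS]
      · rw [Set.indicator_of_mem hgx]; exact hCval g x hgx
      · intro g' hg' hne
        refine Set.indicator_of_notMem (fun hx' => ?_) _
        exact hdisj g' hg' g hgS hne x hx' hgx
    · rw [Finset.sum_eq_zero fun g hg =>
        Set.indicator_of_notMem (fun hxg => hx ⟨g, hg, hxg⟩) _]
      by_contra h
      exact hx (hcov2 x (subset_tsupport φ (by simpa using h)))
  have hμC : ∀ g : G, μ (C g) = μ (K : Set G) := fun g => measure_preimage_mul μ g⁻¹ _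
  have hμK0 : μ (K : Set G) ≠ 0 := hKopen.measure_ne_zero μ ⟨1, K.one_mem⟩
  have hμKtop : μ (K : Set G) ≠ ⊤ := hKcomp.measure_lt_top.ne
  have hfiber : ∀ v : W, v ≠ 0 →
      φ ⁻¹' {v} = ⋃ g ∈ S.filter (fun g => φ g = v), C g := by
    intro v hv
    ext x
    simp only [Set.mem_preimage, Set.mem_singleton_iff, Set.mem_iUnion, Finset.mem_filter,
      exists_prop]
    constructor
    · intro hxv
      have hxs : x ∈ tsupport φ := subset_tsupport φ (by simp [hxv, hv])
      obtain ⟨g, hgS, hgx⟩ := hcov2 x hxs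
      exact ⟨g, ⟨hgS, by rw [← hCval g x hgx, hxv]⟩, hgx⟩
    · rintro ⟨g, ⟨hgS, hgv⟩, hgx⟩
      rw [hCval g x hgx, hgv]
  have hμfiber : ∀ v : W, v ≠ 0 →
      μ (φ ⁻¹' {v}) = (S.filter (fun g => φ g = v)).card * μ (K : Set G) := by
    intro v hv
    rw [hfiber v hv]
    rw [measure_biUnion_finset ?_ (fun g _ => (hCopen g).measurableSet)]
    · rw [Finset.sum_congr rfl (fun g _ => hμC g), Finset.sum_const, nsmul_eq_mul]
    · intro g hg g' hg' hne
      refine Set.disjoint_left.mpr fun x hx hx' => ?_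
      exact hdisj g (Finset.mem_filter.mp (Finset.mem_coe.mp hg)).1
        g' (Finset.mem_filter.mp (Finset.mem_coe.mp hg')).1 hne x hx hx'
  set c : ℂ := ((μ (K : Set G)).toReal : ℂ) with hcdef
  have hcne : c ≠ 0 := by
    simp only [hcdef, ne_eq, Complex.ofReal_eq_zero]
    exact ENNReal.toReal_ne_zero.mpr ⟨hμK0, hμKtop⟩
  have hsum0 : ∑ g ∈ S, φ g = 0 := by
    have hsupp : Function.support
        (fun v : W => (((μ (φ ⁻¹' {v})).toReal : ℝ) : ℂ) • v) ⊆ ↑(S.image φ) := by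
      intro v hv
      rw [Function.mem_support] at hv
      by_contra hvS
      have hvne : v ≠ 0 := fun h => hv (by rw [h, smul_zero])
      apply hv
      have hemp : S.filter (fun g => φ g = v) = ∅ := by
        rw [Finset.filter_eq_empty_iff]
        intro g hg hgv
        exact hvS (Finset.mem_coe.mpr (Finset.mem_image.mpr ⟨g, hg, hgv⟩))
      simp [hμfiber v hvne, hemp]
    have h1 : smInt μ φ = ∑ v ∈ S.image φ, (((μ (φ ⁻¹' {v})).toReal : ℝ) : ℂ) • v :=
      finsum_eq_sum_of_support_subset _ hsupp
    have h2 : ∑ v ∈ S.image φ, (((μ (φ ⁻¹' {v})).toReal : ℝ) : ℂ) • v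
        = ∑ g ∈ S, c • φ g := by
      refine Finset.sum_image' _ (fun g hg => ?_)
      show (((μ (φ ⁻¹' {φ g})).toReal : ℝ) : ℂ) • φ g
          = ∑ g' ∈ S.filter (fun g' => φ g' = φ g), c • φ g'
      by_cases hgv : φ g = 0
      · rw [hgv, smul_zero]
        exact (Finset.sum_eq_zero fun g' hg' => by
          rw [(Finset.mem_filter.mp hg').2, smul_zero]).symm
      · rw [hμfiber _ hgv]
        have hcong : ∀ g' ∈ S.filter (fun g' => φ g' = φ g), c • φ g' = c • φ g :=
          fun g' hg' => by rw [(Finset.mem_filter.mp hg').2]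
        rw [Finset.sum_congr rfl hcong, Finset.sum_const]
        rw [ENNReal.toReal_mul, ENNReal.toReal_natCast]
        push_cast
        rw [mul_smul, Nat.cast_smul_eq_nsmul]
    have h3 : c • ∑ g ∈ S, φ g = 0 := by
      rw [Finset.smul_sum, ← h2, ← h1]; exact hint
    exact (smul_eq_zero.mp h3).resolve_left hcne
  set ψ : G → G → W := fun g => Set.indicator (K : Set G) (fun _ => φ g) with hψdef
  have hψmem : ∀ g, ψ g ∈ SmCc G W := by
    intro g
    constructor
    · rw [IsLocallyConstant.iff_exists_open]
      intro x
      by_cases hx : x ∈ (K : Set G)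
      · exact ⟨K, hKopen, hx, fun y hy => by
          simp [hψdef, Set.indicator_of_mem hy, Set.indicator_of_mem hx]⟩
      · exact ⟨(K : Set G)ᶜ, (K.isClosed_of_isOpen hKopen).isOpen_compl, hx, fun y hy => by
          simp [hψdef, Set.indicator_of_notMem hy, Set.indicator_of_notMem hx]⟩
    · exact HasCompactSupport.intro hKcomp (fun x hx => Set.indicator_of_notMem hx _)
  have hLψ : ∀ g x, ψ g (g⁻¹ * x) = Set.indicator (C g) (fun _ => φ g) x := by
    intro g x
    by_cases hx : x ∈ C g
    · have h1 : (g⁻¹ * x) ∈ (K : Set G) := hx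
      rw [Set.indicator_of_mem hx]
      show Set.indicator (K : Set G) (fun _ => φ g) (g⁻¹ * x) = φ g
      rw [Set.indicator_of_mem h1]
    · have h1 : (g⁻¹ * x) ∉ (K : Set G) := hx
      rw [Set.indicator_of_notMem hx]
      show Set.indicator (K : Set G) (fun _ => φ g) (g⁻¹ * x) = 0
      rw [Set.indicator_of_notMem h1]
  have hfinal : φ = ∑ g ∈ S, ((fun x => ψ g (g⁻¹ * x)) - ψ g) := by
    funext x
    rw [Finset.sum_apply]
    rw [Finset.sum_congr rfl (fun g _ => by
      show ((fun x => ψ g (g⁻¹ * x)) - ψ g) x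
        = Set.indicator (C g) (fun _ => φ g) x - ψ g x
      rw [Pi.sub_apply, hLψ g x])]
    rw [Finset.sum_sub_distrib]
    have hz : ∑ g ∈ S, ψ g x = 0 := by
      by_cases hx : x ∈ (K : Set G)
      · simp only [hψdef, Set.indicator_of_mem hx]
        exact hsum0
      · simp [hψdef, Set.indicator_of_notMem hx]
    rw [hz, sub_zero, ← hrep x]
  rw [hfinal]
  exact Submodule.sum_mem _ fun g hg => Submodule.subset_span ⟨g, ψ g, hψmem g, rfl⟩
end
end

section
/- Let G be an l-group with left Haar measure dg and (π, W) a smooth G-module. Let G act on C_c^∞(G, W) by (g·φ)(x) = π(g)(φ(g^{-1}x)). If φ ∈ C_c^∞(G, W) satisfies ∫_G π(g)^{-1}(φ(g)) dg = 0, then φ is a finite linear combination of elements of the form g·ψ − ψ with g ∈ G and ψ ∈ C_c^∞(G, W). -/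
open MeasureTheory
open scoped Pointwise

noncomputable section

lemma image_finite_of_locConstOn {X Y : Type*} [TopologicalSpace X] {f : X → Y} {C : Set X}
    (hC : IsCompact C) (h : ∀ x ∈ C, ∃ U, IsOpen U ∧ x ∈ U ∧ ∀ y ∈ U, f y = f x) :
    (f '' C).Finite := by
  choose U hUo hxU hUc using h
  obtain ⟨t, hcov⟩ := hC.elim_nhds_subcover' (fun x hx => U x hx)
    (fun x hx => (hUo x hx).mem_nhds (hxU x hx))
  apply Set.Finite.subset (t.finite_toSet.image (fun x => f x.1))
  rintro y ⟨x, hx, rfl⟩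
  obtain ⟨z, hz⟩ := Set.mem_iUnion.1 (hcov hx)
  simp only [Set.mem_iUnion] at hz
  obtain ⟨hzt, hxU⟩ := hz
  exact ⟨z, hzt, (hUc z.1 z.2 x hxU).symm⟩

lemma exists_compactOpen_le {G : Type*} [Group G] [TopologicalSpace G] [IsTopologicalGroup G]
    [T2Space G] (K : Subgroup G) (hc : IsCompact (K : Set G)) (ho : IsOpen (K : Set G))
    {ι : Type*} (t : Finset ι) (S : ι → Subgroup G) (hS : ∀ i ∈ t, IsOpen (S i : Set G)) :
    ∃ K' : Subgroup G, IsCompact (K' : Set G) ∧ IsOpen (K' : Set G) ∧ K' ≤ K ∧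
      ∀ i ∈ t, K' ≤ S i := by
  refine ⟨K ⊓ ⨅ i ∈ t, S i, ?_, ?_, inf_le_left, fun i hi => inf_le_right.trans ?_⟩
  · have hcoe : ((K ⊓ ⨅ i ∈ t, S i : Subgroup G) : Set G)
        = (K : Set G) ∩ ⋂ i ∈ t, (S i : Set G) := by
      simp [Subgroup.coe_iInf]
    rw [hcoe]
    refine hc.of_isClosed_subset ?_ Set.inter_subset_left
    exact IsClosed.inter hc.isClosed (isClosed_biInter fun i hi =>
      (S i).isClosed_of_isOpen (hS i hi))
  · have hcoe : ((K ⊓ ⨅ i ∈ t, S i : Subgroup G) : Set G)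
        = (K : Set G) ∩ ⋂ i ∈ t, (S i : Set G) := by
      simp [Subgroup.coe_iInf]
    rw [hcoe]
    exact ho.inter (isOpen_biInter_finset hS)
  · exact biInf_le S hi

lemma indicator_mem_smCc_aux {X : Type*} [TopologicalSpace X] [T2Space X]
    {V : Type*} [AddCommGroup V] [Module ℂ V] {K : Set X}
    (hc : IsCompact K) (ho : IsOpen K) (hcl : IsClosed K) (v : V) :
    IsLocallyConstant (K.indicator (fun _ => v)) ∧
      HasCompactSupport (K.indicator (fun _ => v)) := by
  constructor
  · intro s
    classical
    by_cases hv : v ∈ s <;> by_cases h0 : (0 : V) ∈ s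
    · convert isOpen_univ
      ext x; by_cases hx : x ∈ K <;> simp [Set.indicator, hx, hv, h0]
    · convert ho
      ext x; by_cases hx : x ∈ K <;> simp [Set.indicator, hx, hv, h0]
    · convert hcl.isOpen_compl
      ext x; by_cases hx : x ∈ K <;> simp [Set.indicator, hx, hv, h0]
    · convert isOpen_empty
      ext x; by_cases hx : x ∈ K <;> simp [Set.indicator, hx, hv, h0]
  · exact HasCompactSupport.intro hc (fun x hx => Set.indicator_of_notMem hx _)


/-- For a smooth `G`-module `(π, W)` and the action
`(g·φ)(x) = π(g)(φ(g⁻¹x))` on `C_c^∞(G, W)`: if `∫_G π(g)⁻¹(φ(g)) dg = 0` then `φ` is a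
finite linear combination of elements `g·ψ − ψ`. -/
theorem twisted_integral_zero_mem_span
    (G : Type*) [Group G] [TopologicalSpace G] [IsTopologicalGroup G] [T2Space G]
    [LocallyCompactSpace G] [TotallyDisconnectedSpace G] [SigmaCompactSpace G]
    (hG : HasCompactOpenBasis G)
    [MeasurableSpace G] [BorelSpace G] (μ : Measure G) [μ.IsHaarMeasure]
    (W : Type*) [AddCommGroup W] [Module ℂ W]
    (ρ : Representation ℂ G W) (hρ : SmoothRep ρ)
    (φ : G → W) (hφ : φ ∈ SmCc G W)
    (hint : smInt μ (fun g => ρ g⁻¹ (φ g)) = 0) :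
    φ ∈ Submodule.span ℂ
      {h : G → W | ∃ (g : G) (ψ : G → W), ψ ∈ SmCc G W ∧
        h = (fun x => ρ g (ψ (g⁻¹ * x))) - ψ} := by
  classical
  obtain ⟨hlc, hcs⟩ := hφ
  set f : G → W := fun g => ρ g⁻¹ (φ g) with hfdef
  have hf0 : ∀ x, φ x = 0 → f x = 0 := by
    intro x hx; simp only [hfdef, hx, map_zero]
  -- base compact open subgroup
  obtain ⟨K₁, hK₁c, hK₁o, -⟩ := hG Set.univ Filter.univ_mem
  -- uniform right invariance subgroups
  have hS : ∀ x : G, ∃ S : Subgroup G, IsOpen (S : Set G) ∧ (x ∈ tsupport φ →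
      ∀ k ∈ S, φ (x * k) = φ x) := by
    intro x
    by_cases hx : x ∈ tsupport φ
    · obtain ⟨O, hOo, hxO, hOc⟩ := hlc.exists_open x
      have h1 : (fun k : G => x * k) ⁻¹' O ∈ nhds (1 : G) := by
        refine ContinuousAt.preimage_mem_nhds ?_ ?_
        · exact (continuous_const.mul continuous_id).continuousAt
        · simpa using hOo.mem_nhds hxO
      obtain ⟨S, hSc, hSo, hSsub⟩ := hG _ h1
      exact ⟨S, hSo, fun _ k hk => hOc _ (hSsub hk)⟩
    · exact ⟨⊤, by simp, fun h => absurd h hx⟩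
  choose S hSo hSinv using hS
  obtain ⟨t₀, ht₀s, hcov₀⟩ := hcs.elim_nhds_subcover (fun x => {y | x⁻¹ * y ∈ S x})
    (fun x _ => ((hSo x).preimage (continuous_const.mul continuous_id)).mem_nhds
      (by simpa using (S x).one_mem))
  obtain ⟨K', hK'c, hK'o, hK'le₁, hK'leS⟩ := exists_compactOpen_le K₁ hK₁c hK₁o t₀ S
    (fun x _ => hSo x)
  have hrinv : ∀ x : G, ∀ k ∈ K', φ (x * k) = φ x := by
    have key : ∀ y ∈ ⋃ x ∈ t₀, {z | x⁻¹ * z ∈ S x}, ∀ k ∈ K', φ (y * k) = φ y := by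
      intro y hy k hk
      simp only [Set.mem_iUnion, Set.mem_setOf_eq] at hy
      obtain ⟨x, hxt, hyx⟩ := hy
      have h1 : φ y = φ x := by
        have := hSinv x (ht₀s x hxt) _ hyx
        simpa using this
      have h2 : φ (y * k) = φ x := by
        have hmem : x⁻¹ * y * k ∈ S x := (S x).mul_mem hyx (hK'leS x hxt hk)
        have h3 := hSinv x (ht₀s x hxt) _ hmem
        calc φ (y * k) = φ (x * (x⁻¹ * y * k)) := by
              rw [show x * (x⁻¹ * y * k) = y * k by group]
        _ = φ x := h3
      rw [h1, h2]
    intro x k hk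
    by_cases hx : x ∈ ⋃ x ∈ t₀, {z | x⁻¹ * z ∈ S x}
    · exact key x hx k hk
    · by_cases hxk : x * k ∈ ⋃ x ∈ t₀, {z | x⁻¹ * z ∈ S x}
      · have h4 := key _ hxk k⁻¹ (K'.inv_mem hk)
        simp only [mul_assoc, mul_inv_cancel, mul_one] at h4
        exact h4.symm
      · have h1 : φ x = 0 := image_eq_zero_of_notMem_tsupport (fun hmem => hx (hcov₀ hmem))
        have h2 : φ (x * k) = 0 :=
          image_eq_zero_of_notMem_tsupport (fun hmem => hxk (hcov₀ hmem))
        rw [h1, h2]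
  -- finite range of f
  have hfin : (Set.range f).Finite := by
    have himg : (f '' tsupport φ).Finite := by
      apply image_finite_of_locConstOn hcs
      intro x hx
      obtain ⟨O, hOo, hxO, hOc⟩ := hlc.exists_open x
      obtain ⟨U, hUo, hUfix⟩ := hρ (ρ x⁻¹ (φ x))
      refine ⟨O ∩ {y | x⁻¹ * y ∈ U},
        hOo.inter (hUo.preimage (continuous_const.mul continuous_id)),
        ⟨hxO, by simpa using U.one_mem⟩, ?_⟩
      rintro y ⟨hyO, hyU⟩
      have h1 : φ y = φ x := hOc y hyO
      have h2 : y⁻¹ = (x⁻¹ * y)⁻¹ * x⁻¹ := by group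
      calc f y = ρ y⁻¹ (φ x) := by simp only [hfdef, h1]
      _ = ρ ((x⁻¹ * y)⁻¹) (ρ x⁻¹ (φ x)) := by rw [h2, map_mul]; rfl
      _ = ρ x⁻¹ (φ x) := hUfix _ (U.inv_mem hyU)
      _ = f x := by simp only [hfdef]
    refine (himg.union (Set.finite_singleton 0)).subset ?_
    rintro _ ⟨x, rfl⟩
    by_cases hx : x ∈ tsupport φ
    · exact Or.inl ⟨x, hx, rfl⟩
    · exact Or.inr (by simp [hf0 x (image_eq_zero_of_notMem_tsupport hx)])
  -- final subgroup K
  choose Uρ hUρo hUρfix using hρ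
  obtain ⟨K, hKc, hKo, hKle, hKleU⟩ := exists_compactOpen_le K' hK'c hK'o hfin.toFinset Uρ
    (fun v _ => hUρo v)
  have hKrinvφ : ∀ x : G, ∀ k ∈ K, φ (x * k) = φ x := fun x k hk => hrinv x k (hKle hk)
  have hKfix : ∀ k ∈ K, ∀ x : G, ρ k (f x) = f x := fun k hk x =>
    hUρfix (f x) k (hKleU (f x) (hfin.mem_toFinset.2 (Set.mem_range_self x)) hk)
  have hKrinvf : ∀ x : G, ∀ k ∈ K, f (x * k) = f x := by
    intro x k hk
    have h1 : f (x * k) = ρ k⁻¹ (f x) := by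
      simp only [hfdef]
      rw [hKrinvφ x k hk, mul_inv_rev, map_mul]
      rfl
    rw [h1]
    exact hKfix k⁻¹ (K.inv_mem hk) x
  -- cosets
  set D : G → Set G :=
    fun g => {x | (QuotientGroup.mk x : G ⧸ K) = QuotientGroup.mk g} with hDdef
  have hDc : ∀ g x, x ∈ D g ↔ (QuotientGroup.mk x : G ⧸ K) = QuotientGroup.mk g := by
    intro g x; simp only [hDdef, Set.mem_setOf_eq]
  have hDmem : ∀ g x, x ∈ D g ↔ g⁻¹ * x ∈ (K : Set G) := by
    intro g x
    rw [hDc]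
    constructor
    · intro h
      have h2 : x⁻¹ * g ∈ K := QuotientGroup.eq.1 h
      simpa using K.inv_mem h2
    · intro h
      have h2 : x⁻¹ * g ∈ K := by simpa using K.inv_mem h
      exact QuotientGroup.eq.2 h2
  have hDself : ∀ g, g ∈ D g := fun g => (hDc g g).2 rfl
  have hDeq : ∀ g, D g = (fun x => g⁻¹ * x) ⁻¹' (K : Set G) := by
    intro g; ext x; exact hDmem g x
  have hDopen : ∀ g, IsOpen (D g) := by
    intro g; rw [hDeq]
    exact hKo.preimage (continuous_const.mul continuous_id)
  have hDφ : ∀ g x, x ∈ D g → φ x = φ g := by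
    intro g x hx
    have h := hKrinvφ g (g⁻¹ * x) ((hDmem g x).1 hx)
    simpa using h
  have hDf : ∀ g x, x ∈ D g → f x = f g := by
    intro g x hx
    have h := hKrinvf g (g⁻¹ * x) ((hDmem g x).1 hx)
    simpa using h
  have hDμ : ∀ g, μ (D g) = μ (K : Set G) := by
    intro g; rw [hDeq]
    exact measure_preimage_mul μ g⁻¹ _
  -- coset representatives
  obtain ⟨t₁, ht₁s, ht₁cov⟩ := hcs.elim_nhds_subcover D
    (fun x _ => (hDopen x).mem_nhds (hDself x))
  set t : Finset G := (t₁.image (QuotientGroup.mk : G → G ⧸ K)).image Quotient.out with htdef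
  have hinj : ∀ g ∈ t, ∀ g' ∈ t,
      (QuotientGroup.mk g : G ⧸ K) = QuotientGroup.mk g' → g = g' := by
    intro g hg g' hg' hcc
    simp only [htdef, Finset.mem_image] at hg hg'
    obtain ⟨q, -, rfl⟩ := hg
    obtain ⟨q', -, rfl⟩ := hg'
    have h1 : (QuotientGroup.mk (Quotient.out q) : G ⧸ K) = q := QuotientGroup.out_eq' q
    have h2 : (QuotientGroup.mk (Quotient.out q') : G ⧸ K) = q' := QuotientGroup.out_eq' q'
    rw [h1, h2] at hcc
    rw [hcc]
  have hcovt : ∀ x ∈ tsupport φ, ∃ g ∈ t, x ∈ D g := by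
    intro x hx
    obtain ⟨x₁, hx₁⟩ := Set.mem_iUnion.1 (ht₁cov hx)
    simp only [Set.mem_iUnion] at hx₁
    obtain ⟨hx₁t, hxD⟩ := hx₁
    refine ⟨Quotient.out (QuotientGroup.mk x₁ : G ⧸ K), ?_, ?_⟩
    · simp only [htdef, Finset.mem_image]
      exact ⟨QuotientGroup.mk x₁, ⟨x₁, hx₁t, rfl⟩, rfl⟩
    · rw [hDc]
      rw [QuotientGroup.out_eq' (QuotientGroup.mk x₁ : G ⧸ K)]
      exact (hDc x₁ x).1 hxD
  -- decomposition
  have hdecomp : ∀ (h : G → W), (∀ g x, x ∈ D g → h x = h g) →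
      (∀ x, x ∉ tsupport φ → h x = 0) →
      ∀ x, h x = ∑ g ∈ t, (D g).indicator (fun _ => h g) x := by
    intro h hhD hh0 x
    by_cases hx : ∃ g ∈ t, x ∈ D g
    · obtain ⟨g₀, hg₀t, hg₀⟩ := hx
      rw [Finset.sum_eq_single_of_mem g₀ hg₀t]
      · rw [Set.indicator_of_mem hg₀]; exact hhD g₀ x hg₀
      · intro g hg hne
        apply Set.indicator_of_notMem
        intro hxg
        refine hne (hinj g hg g₀ hg₀t ?_)
        rw [← (hDc g x).1 hxg, (hDc g₀ x).1 hg₀]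
    · push_neg at hx
      have hxs : x ∉ tsupport φ := by
        intro hmem
        obtain ⟨g, hg, hxg⟩ := hcovt x hmem
        exact hx g hg hxg
      rw [hh0 x hxs]
      exact (Finset.sum_eq_zero fun g hg => Set.indicator_of_notMem (hx g hg) _).symm
  have hφdec := hdecomp φ hDφ (fun x hx => image_eq_zero_of_notMem_tsupport hx)
  -- span elements
  have hρρ : ∀ g, ρ g (f g) = φ g := by
    intro g
    simp only [hfdef]
    have h1 : ρ g (ρ g⁻¹ (φ g)) = (ρ g * ρ g⁻¹) (φ g) := rfl
    rw [h1, ← map_mul, mul_inv_cancel, map_one]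
    rfl
  have hKclosed : IsClosed (K : Set G) := K.isClosed_of_isOpen hKo
  have hψmem : ∀ v : W, ((K : Set G).indicator (fun _ => v)) ∈ SmCc G W :=
    fun v => indicator_mem_smCc_aux hKc hKo hKclosed v
  set w : W := ∑ g ∈ t, f g with hwdef
  have hEg : ∀ g ∈ t,
      ((D g).indicator (fun _ => φ g) - (K : Set G).indicator (fun _ => f g)) ∈
        Submodule.span ℂ {h : G → W | ∃ (g : G) (ψ : G → W), ψ ∈ SmCc G W ∧
          h = (fun x => ρ g (ψ (g⁻¹ * x))) - ψ} := by
    intro g hg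
    apply Submodule.subset_span
    refine ⟨g, (K : Set G).indicator (fun _ => f g), hψmem _, ?_⟩
    funext x
    simp only [Pi.sub_apply]
    congr 1
    by_cases hx : x ∈ D g
    · rw [Set.indicator_of_mem hx, Set.indicator_of_mem ((hDmem g x).1 hx)]
      exact (hρρ g).symm
    · rw [Set.indicator_of_notMem hx,
        Set.indicator_of_notMem (fun hK => hx ((hDmem g x).2 hK)), map_zero]
  -- φ as a sum
  have hφsum : φ = (∑ g ∈ t, ((D g).indicator (fun _ => φ g)
      - (K : Set G).indicator (fun _ => f g)))
      + (K : Set G).indicator (fun _ => w) := by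
    funext x
    have h1 := hφdec x
    simp only [Pi.add_apply, Finset.sum_apply, Pi.sub_apply, Finset.sum_sub_distrib]
    have h2 : ∑ g ∈ t, (K : Set G).indicator (fun _ => f g) x
        = (K : Set G).indicator (fun _ => w) x := by
      by_cases hx : x ∈ (K : Set G)
      · simp only [Set.indicator_of_mem hx, hwdef]
      · simp only [Set.indicator_of_notMem hx, Finset.sum_const_zero]
    rw [h2, ← h1]
    abel
  -- integral computation
  have hμKpos : μ (K : Set G) ≠ 0 := (hKo.measure_pos μ ⟨1, K.one_mem⟩).ne'
  have hμKfin : μ (K : Set G) ≠ ⊤ := hKc.measure_lt_top.ne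
  set cK : ℂ := ((μ (K : Set G)).toReal : ℂ) with hcK
  have hcKne : cK ≠ 0 := by
    simp only [hcK, ne_eq, Complex.ofReal_eq_zero]
    exact ENNReal.toReal_ne_zero.2 ⟨hμKpos, hμKfin⟩
  have hsuppsub : Function.support (fun v : W => (((μ (f ⁻¹' {v})).toReal : ℝ) : ℂ) • v)
      ⊆ ↑(t.image f) := by
    intro v hv
    have hv0 : v ≠ 0 := by rintro rfl; simp at hv
    have hμv : μ (f ⁻¹' {v}) ≠ 0 := by
      intro h
      apply hv
      simp only [h, ENNReal.toReal_zero, Complex.ofReal_zero, zero_smul]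
    obtain ⟨x, hx⟩ := nonempty_of_measure_ne_zero hμv
    have hfx : f x = v := hx
    have hφx : φ x ≠ 0 := by
      intro h
      exact hv0 (by rw [← hfx]; exact hf0 x h)
    have hxs : x ∈ tsupport φ := subset_closure hφx
    obtain ⟨g, hg, hxg⟩ := hcovt x hxs
    simp only [Finset.coe_image, Set.mem_image, Finset.mem_coe]
    exact ⟨g, hg, by rw [← hDf g x hxg, hfx]⟩
  have hint2 : smInt μ f = ∑ v ∈ t.image f, (((μ (f ⁻¹' {v})).toReal : ℝ) : ℂ) • v := by
    unfold smInt
    exact finsum_eq_sum_of_support_subset _ hsuppsub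
  have hfiber : ∀ v ∈ t.image f, (((μ (f ⁻¹' {v})).toReal : ℝ) : ℂ) • v
      = ∑ g ∈ t.filter (fun g => f g = v), cK • f g := by
    intro v hv
    by_cases hv0 : v = 0
    · subst hv0
      rw [smul_zero]
      exact (Finset.sum_eq_zero fun g hg => by
        rw [(Finset.mem_filter.1 hg).2, smul_zero]).symm
    · have hset : f ⁻¹' {v} = ⋃ g ∈ t.filter (fun g => f g = v), D g := by
        ext x
        simp only [Set.mem_preimage, Set.mem_singleton_iff, Set.mem_iUnion,
          Finset.mem_filter]
        constructor
        · intro hx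
          have hφx : φ x ≠ 0 := by
            intro h
            exact hv0 (by rw [← hx]; exact hf0 x h)
          have hxs : x ∈ tsupport φ := subset_closure hφx
          obtain ⟨g, hg, hxg⟩ := hcovt x hxs
          exact ⟨g, ⟨hg, by rw [← hDf g x hxg, hx]⟩, hxg⟩
        · rintro ⟨g, ⟨hg, hfg⟩, hxg⟩
          rw [hDf g x hxg, hfg]
      have hdisj : (↑(t.filter (fun g => f g = v)) : Set G).PairwiseDisjoint D := by
        intro g hg g' hg' hne
        simp only [Function.onFun]
        rw [Set.disjoint_left]
        intro x hxg hxg'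
        have e1 := (hDc g x).1 hxg
        have e2 := (hDc g' x).1 hxg'
        exact hne (hinj g (Finset.mem_of_mem_filter g (Finset.mem_coe.1 hg)) g'
          (Finset.mem_of_mem_filter g' (Finset.mem_coe.1 hg')) (e1.symm.trans e2))
      rw [hset, measure_biUnion_finset hdisj (fun g _ => (hDopen g).measurableSet)]
      rw [Finset.sum_congr rfl (fun g _ => hDμ g), Finset.sum_const, nsmul_eq_mul]
      have hall : ∀ g ∈ t.filter (fun g => f g = v), cK • f g = cK • v := by
        intro g hg; rw [(Finset.mem_filter.1 hg).2]
      rw [Finset.sum_congr rfl hall, Finset.sum_const]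
      rw [hcK, ENNReal.toReal_mul, ENNReal.toReal_natCast, Complex.ofReal_mul, mul_smul,
        Complex.ofReal_natCast, Nat.cast_smul_eq_nsmul]
  have hsmInt : smInt μ f = cK • w := by
    rw [hint2, Finset.sum_congr rfl hfiber,
      Finset.sum_fiberwise_of_maps_to (fun g hg => Finset.mem_image_of_mem f hg),
      hwdef, ← Finset.smul_sum]
  have hw0 : w = 0 := by
    have h := hint
    rw [hsmInt] at h
    rcases smul_eq_zero.1 h with h' | h'
    · exact absurd h' hcKne
    · exact h'
  rw [hφsum, hw0]
  have hz : (K : Set G).indicator (fun _ => (0 : W)) = 0 := Set.indicator_zero' _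
  rw [hz, add_zero]
  exact Submodule.sum_mem _ hEg
end
end

section
/- Let G be an l-group, H a closed subgroup of G with left Haar measure dh, and (π, V) a smooth H-module. For F ∈ C_c^∞(G, V) define i(F): G → V by i(F)(g) = ∫_H π(h)(F(gh)) dh. Then i(F) belongs to ind_H^G V, and the resulting linear map i: C_c^∞(G, V) → ind_H^G V is a surjective morphism of smooth G-modules, where G acts on C_c^∞(G, V) by left translation in the variable only, (g₀·F)(g) = F(g₀^{-1}g), and on ind_H^G V by left translation. -/
open MeasureTheory
open scoped Pointwise

noncomputable section

/-- Membership in the (unnormalized) smoothly induced module `ind_H^G V` of a smooth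
representation `(π, V)` of a closed subgroup `H ≤ G`:  `φ : G → V` is left-invariant under
some compact open subgroup, has support compact modulo `H`, and satisfies
`φ(gh) = π(h)⁻¹ φ(g)`. -/
def IsInd {G : Type*} [Group G] [TopologicalSpace G] (H : Subgroup G) {V : Type*}
    [AddCommGroup V] [Module ℂ V] (ρ : Representation ℂ H V) (φ : G → V) : Prop :=
  (∃ K : Subgroup G, IsCompact (K : Set G) ∧ IsOpen (K : Set G) ∧
    ∀ k ∈ K, ∀ g : G, φ (k * g) = φ g) ∧
  (∃ C : Set G, IsCompact C ∧ Function.support φ ⊆ C * (H : Set G)) ∧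
  (∀ (g : G) (h : H), φ (g * h) = ρ h⁻¹ (φ g))

/-- The averaging map `i(F)(g) = ∫_H π(h)(F(gh)) dh` from `C_c^∞(G, V)` to `ind_H^G V`. -/
def indAvg {G : Type*} [Group G] [TopologicalSpace G] {H : Subgroup G}
    [MeasurableSpace H] (ν : Measure H) {V : Type*} [AddCommGroup V] [Module ℂ V]
    (ρ : Representation ℂ H V) (F : G → V) : G → V :=
  fun g => smInt ν (fun h : H => ρ h (F (g * h)))

/-! ### Auxiliary lemmas -/

section SmIntAux

variable {Y : Type*} [MeasurableSpace Y] {V : Type*} [AddCommGroup V] [Module ℂ V]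
  {ν : Measure Y}

lemma smInt_support_subset (ν : Measure Y) (f : Y → V) :
    (Function.support fun v : V => (((ν (f ⁻¹' {v})).toReal : ℝ) : ℂ) • v) ⊆ Set.range f := by
  intro v hv
  by_contra hvr
  apply hv
  have hempty : f ⁻¹' {v} = ∅ :=
    Set.eq_empty_of_forall_notMem fun y hy => hvr ⟨y, Set.mem_singleton_iff.mp hy⟩
  simp [hempty]

lemma smInt_zero_s11 : smInt ν (fun _ : Y => (0 : V)) = 0 := by
  refine finsum_eq_zero_of_forall_eq_zero fun v => ?_
  rcases eq_or_ne v 0 with rfl | hv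
  · simp
  · have hempty : (fun _ : Y => (0 : V)) ⁻¹' {v} = ∅ :=
      Set.eq_empty_of_forall_notMem fun y hy => hv (Set.mem_singleton_iff.mp hy).symm
    simp [hempty]

/-- Master lemma: `smInt` of a function factoring through a finite measurable partition
equals the corresponding finite sum over the partition. -/
lemma smInt_eq_sum_fiber {Z : Type*} (ν : Measure Y) (P : Y → Z) (F : Z → V) (f : Y → V)
    (hfP : ∀ y, f y = F (P y)) (hfin : (Set.range P).Finite)
    (hmeas : ∀ z : Z, MeasurableSet (P ⁻¹' {z}))
    (hfm : ∀ z : Z, F z ≠ 0 → ν (P ⁻¹' {z}) ≠ ⊤) :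
    smInt ν f = ∑ z ∈ hfin.toFinset, (((ν (P ⁻¹' {z})).toReal : ℝ) : ℂ) • F z := by
  classical
  have hsub : (Function.support fun v : V => (((ν (f ⁻¹' {v})).toReal : ℝ) : ℂ) • v)
      ⊆ ↑(hfin.toFinset.image F) := by
    intro v hv
    obtain ⟨y, rfl⟩ := smInt_support_subset ν f hv
    simp only [Finset.coe_image, Set.mem_image, Finset.mem_coe, Set.Finite.mem_toFinset]
    exact ⟨P y, Set.mem_range_self y, (hfP y).symm⟩
  rw [smInt, finsum_eq_finset_sum_of_support_subset _ hsub]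
  rw [← Finset.sum_fiberwise_of_maps_to (g := F) (t := hfin.toFinset.image F)
      (fun z hz => Finset.mem_image_of_mem F hz)
      (fun z => (((ν (P ⁻¹' {z})).toReal : ℝ) : ℂ) • F z)]
  refine Finset.sum_congr rfl fun v hv => ?_
  rcases eq_or_ne v 0 with rfl | hv0
  · rw [smul_zero]
    refine (Finset.sum_eq_zero fun z hz => ?_).symm
    rw [(Finset.mem_filter.mp hz).2, smul_zero]
  · have hpre : f ⁻¹' {v} = ⋃ z ∈ hfin.toFinset.filter (F · = v), P ⁻¹' {z} := by
      ext y
      simp only [Set.mem_preimage, Set.mem_singleton_iff, Set.mem_iUnion, Finset.mem_filter,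
        Set.Finite.mem_toFinset, hfP y]
      constructor
      · intro h
        exact ⟨P y, ⟨Set.mem_range_self y, h⟩, rfl⟩
      · rintro ⟨z, ⟨-, hz⟩, hyz⟩
        rw [hyz]
        exact hz
    have hdisj : (↑(hfin.toFinset.filter (F · = v)) : Set Z).PairwiseDisjoint
        (fun z => P ⁻¹' {z}) := by
      intro a _ b _ hab
      simp only [Function.onFun]
      refine Set.disjoint_left.mpr fun y hya hyb => hab ?_
      exact (Set.mem_singleton_iff.mp hya).symm.trans (Set.mem_singleton_iff.mp hyb)
    have hmeq : ν (f ⁻¹' {v}) = ∑ z ∈ hfin.toFinset.filter (F · = v), ν (P ⁻¹' {z}) := by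
      rw [hpre, measure_biUnion_finset hdisj fun z _ => hmeas z]
    rw [hmeq, ENNReal.toReal_sum
      (fun z hz => hfm z (by rw [(Finset.mem_filter.mp hz).2]; exact hv0))]
    push_cast
    rw [Finset.sum_smul]
    refine Finset.sum_congr rfl fun z hz => ?_
    rw [(Finset.mem_filter.mp hz).2]

lemma smInt_map (ν : Measure Y) (f : Y → V) (hfin : (Set.range f).Finite)
    (hmeas : ∀ v : V, MeasurableSet (f ⁻¹' {v})) (hfm : ∀ v : V, v ≠ 0 → ν (f ⁻¹' {v}) ≠ ⊤)
    (T : V →ₗ[ℂ] V) :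
    smInt ν (fun y => T (f y)) = T (smInt ν f) := by
  rw [smInt_eq_sum_fiber ν f (fun v => T v) (fun y => T (f y)) (fun _ => rfl) hfin hmeas
      (fun z hz => hfm z fun h => hz (by rw [h]; simp)),
    smInt_eq_sum_fiber ν f id f (fun _ => rfl) hfin hmeas (fun z hz => hfm z hz),
    map_sum]
  simp

lemma smInt_add_s11 (ν : Measure Y) (f g : Y → V)
    (hf1 : (Set.range f).Finite) (hf2 : ∀ v : V, MeasurableSet (f ⁻¹' {v}))
    (hf3 : ∀ v : V, v ≠ 0 → ν (f ⁻¹' {v}) ≠ ⊤)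
    (hg1 : (Set.range g).Finite) (hg2 : ∀ v : V, MeasurableSet (g ⁻¹' {v}))
    (hg3 : ∀ v : V, v ≠ 0 → ν (g ⁻¹' {v}) ≠ ⊤) :
    smInt ν (fun y => f y + g y) = smInt ν f + smInt ν g := by
  classical
  set P : Y → V × V := fun y => (f y, g y) with hP
  have hPfin : (Set.range P).Finite := by
    refine Set.Finite.subset (hf1.prod hg1) ?_
    rintro _ ⟨y, rfl⟩
    exact ⟨⟨y, rfl⟩, ⟨y, rfl⟩⟩
  have hPpre : ∀ z : V × V, P ⁻¹' {z} = f ⁻¹' {z.1} ∩ g ⁻¹' {z.2} := by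
    intro z
    ext y
    simp [hP, Prod.ext_iff]
  have hPmeas : ∀ z : V × V, MeasurableSet (P ⁻¹' {z}) := fun z => by
    rw [hPpre]; exact (hf2 z.1).inter (hg2 z.2)
  have hPfm : ∀ z : V × V, z.1 ≠ 0 ∨ z.2 ≠ 0 → ν (P ⁻¹' {z}) ≠ ⊤ := by
    intro z hz
    rcases hz with h | h
    · refine ne_top_of_le_ne_top (hf3 z.1 h) (measure_mono ?_)
      rw [hPpre]; exact Set.inter_subset_left
    · refine ne_top_of_le_ne_top (hg3 z.2 h) (measure_mono ?_)
      rw [hPpre]; exact Set.inter_subset_right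
  rw [smInt_eq_sum_fiber ν P (fun z => z.1 + z.2) (fun y => f y + g y) (fun y => rfl) hPfin
      hPmeas (fun z hz => hPfm z (by
        by_contra hc
        push_neg at hc
        exact hz (by simp [hc.1, hc.2]))),
    smInt_eq_sum_fiber ν P (fun z => z.1) f (fun y => rfl) hPfin hPmeas
      (fun z hz => hPfm z (Or.inl hz)),
    smInt_eq_sum_fiber ν P (fun z => z.2) g (fun y => rfl) hPfin hPmeas
      (fun z hz => hPfm z (Or.inr hz)),
    ← Finset.sum_add_distrib]
  exact Finset.sum_congr rfl fun z _ => smul_add _ _ _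

lemma smInt_indicator (ν : Measure Y) (A : Set Y) (w : V) :
    smInt ν (A.indicator fun _ => w) = (((ν A).toReal : ℝ) : ℂ) • w := by
  classical
  rcases eq_or_ne w 0 with rfl | hw
  · rw [smul_zero]
    have h0 : (A.indicator fun _ => (0 : V)) = fun _ : Y => (0 : V) := by simp
    rw [h0, smInt_zero_s11]
  · have hother : ∀ v : V, v ≠ w →
        (((ν ((A.indicator fun _ => w) ⁻¹' {v})).toReal : ℝ) : ℂ) • v = 0 := by
      intro v hv
      rcases eq_or_ne v 0 with rfl | hv0
      · rw [smul_zero]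
      · have hpre : (A.indicator fun _ => w) ⁻¹' {v} = ∅ := by
          refine Set.eq_empty_of_forall_notMem fun y hy => ?_
          rw [Set.mem_preimage, Set.mem_singleton_iff, Set.indicator_apply] at hy
          by_cases hyA : y ∈ A
          · rw [if_pos hyA] at hy; exact hv hy.symm
          · rw [if_neg hyA] at hy; exact hv0 hy.symm
        rw [hpre]
        simp
    have hpreA : (A.indicator fun _ => w) ⁻¹' {w} = A := by
      ext y
      rw [Set.mem_preimage, Set.mem_singleton_iff, Set.indicator_apply]
      by_cases hyA : y ∈ A
      · simp [hyA]
      · simp [hyA, Ne.symm hw]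
    rw [smInt, finsum_eq_single _ w hother, hpreA]

lemma smInt_translate_s11 {G' : Type*} [Group G'] [MeasurableSpace G'] [MeasurableMul G']
    (ν : Measure G') [ν.IsMulLeftInvariant] (h₀ : G') (f : G' → V) :
    smInt ν (fun h => f (h₀ * h)) = smInt ν f := by
  refine finsum_congr fun v => ?_
  have hpre : (fun h => f (h₀ * h)) ⁻¹' {v} = (fun h => h₀ * h) ⁻¹' (f ⁻¹' {v}) := rfl
  rw [hpre, measure_preimage_mul]

/-- A locally constant compactly supported function has finite range, measurable fibers,
and fibers of finite measure away from `0`. -/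
lemma lc_cs_props {Y : Type*} [TopologicalSpace Y] [MeasurableSpace Y] [BorelSpace Y]
    (ν : Measure Y) [IsFiniteMeasureOnCompacts ν] {u : Y → V}
    (h1 : IsLocallyConstant u) (h2 : HasCompactSupport u) :
    (Set.range u).Finite ∧ (∀ v : V, MeasurableSet (u ⁻¹' {v})) ∧
      ∀ v : V, v ≠ 0 → ν (u ⁻¹' {v}) ≠ ⊤ := by
  refine ⟨?_, fun v => (h1.isOpen_fiber v).measurableSet, fun v hv => ?_⟩
  · have hsub : Set.range u ⊆ insert 0 (u '' tsupport u) := by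
      rintro _ ⟨y, rfl⟩
      by_cases hy : u y = 0
      · exact hy ▸ Set.mem_insert _ _
      · exact Set.mem_insert_of_mem _ ⟨y, subset_tsupport u (Function.mem_support.mpr hy), rfl⟩
    refine Set.Finite.subset (Set.Finite.insert 0 ?_) hsub
    have : CompactSpace (tsupport u) := isCompact_iff_compactSpace.mp h2
    have hfin := (h1.comp_continuous continuous_subtype_val :
      IsLocallyConstant (u ∘ (Subtype.val : tsupport u → Y))).range_finite
    have heq : u '' tsupport u = Set.range (u ∘ (Subtype.val : tsupport u → Y)) := by
      rw [Set.range_comp, Subtype.range_coe]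
    rw [heq]
    exact hfin
  · have hsub : u ⁻¹' {v} ⊆ tsupport u := by
      intro y hy
      rw [Set.mem_preimage, Set.mem_singleton_iff] at hy
      exact subset_tsupport u (Function.mem_support.mpr (by rw [hy]; exact hv))
    exact ((measure_mono hsub).trans_lt h2.measure_lt_top).ne

end SmIntAux

section GroupAux

variable {G : Type*} [Group G] [TopologicalSpace G] [IsTopologicalGroup G]
  {V : Type*} [AddCommGroup V] [Module ℂ V]

/-- The integrand `h ↦ ρ(h) F(g h)` of the averaging map is locally constant. -/
lemma integrand_lc {H : Subgroup G} {ρ : Representation ℂ H V} (hρ : SmoothRep ρ)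
    {F : G → V} (h1 : IsLocallyConstant F) (g : G) :
    IsLocallyConstant fun h : H => ρ h (F (g * ↑h)) := by
  rw [IsLocallyConstant.iff_exists_open]
  intro h₀
  obtain ⟨U, hUo, hUm, hUc⟩ := h1.exists_open (g * ↑h₀)
  obtain ⟨U', hU'o, hU'f⟩ := hρ (F (g * ↑h₀))
  refine ⟨((fun h : H => g * ↑h) ⁻¹' U) ∩ ((fun h : H => h₀⁻¹ * h) ⁻¹' ↑U'),
    IsOpen.inter (hUo.preimage (continuous_const.mul continuous_subtype_val))
      (hU'o.preimage (continuous_const.mul continuous_id)), ⟨hUm, by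
        simp only [Set.mem_preimage, inv_mul_cancel, SetLike.mem_coe]
        exact one_mem U'⟩, ?_⟩
  rintro h ⟨hh1, hh2⟩
  have e1 : F (g * ↑h) = F (g * ↑h₀) := hUc _ hh1
  rw [e1]
  have e2 : h = h₀ * (h₀⁻¹ * h) := by rw [mul_inv_cancel_left]
  rw [show (ρ h) (F (g * ↑h₀)) = (ρ (h₀ * (h₀⁻¹ * h))) (F (g * ↑h₀)) by rw [← e2],
    map_mul, Module.End.mul_apply, hU'f _ hh2]

/-- The integrand `h ↦ ρ(h) F(g h)` of the averaging map has compact support. -/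
lemma integrand_cs {H : Subgroup G} [T2Space G] (hHcl : IsClosed (H : Set G))
    {ρ : Representation ℂ H V} {F : G → V} (h2 : HasCompactSupport F) (g : G) :
    HasCompactSupport fun h : H => ρ h (F (g * ↑h)) := by
  have hK : IsCompact ((Subtype.val : H → G) ⁻¹' ((fun x : G => g * x) ⁻¹' tsupport F)) := by
    refine hHcl.isClosedEmbedding_subtypeVal.isCompact_preimage ?_
    exact (Homeomorph.mulLeft g).isCompact_preimage.mpr h2
  refine HasCompactSupport.intro hK fun h hh => ?_
  have hz : F (g * ↑h) = 0 := image_eq_zero_of_notMem_tsupport fun hc => hh hc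
  rw [hz, map_zero]

/-- Uniform smoothness: a locally constant compactly supported function is invariant under
left translation by some compact open subgroup. -/
lemma exists_uniform_inv [T2Space G] (hG : HasCompactOpenBasis G)
    {F : G → V} (h1 : IsLocallyConstant F) (h2 : HasCompactSupport F) :
    ∃ K : Subgroup G, IsCompact (K : Set G) ∧ IsOpen (K : Set G) ∧
      ∀ k ∈ K, ∀ g : G, F (k * g) = F g := by
  classical
  have hx : ∀ x : G, ∃ K : Subgroup G, IsCompact (K : Set G) ∧ IsOpen (K : Set G) ∧
      ∀ k ∈ K, F (k * x) = F x := by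
    intro x
    obtain ⟨U, hUo, hUm, hUc⟩ := h1.exists_open x
    have hW : (fun y : G => y * x) ⁻¹' U ∈ nhds (1 : G) := by
      refine IsOpen.mem_nhds (hUo.preimage (continuous_mul_right x)) ?_
      simpa using hUm
    obtain ⟨K, hKc, hKo, hKsub⟩ := hG _ hW
    exact ⟨K, hKc, hKo, fun k hk => hUc _ (hKsub hk)⟩
  choose Kx hKxc hKxo hKxinv using hx
  obtain ⟨K₀, hK₀c, hK₀o, -⟩ := hG Set.univ Filter.univ_mem
  obtain ⟨t, -, hcov⟩ := (h2 : IsCompact (tsupport F)).elim_nhds_subcover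
    (fun x => (fun y : G => y * x⁻¹) ⁻¹' ↑(Kx x))
    (fun x _ => ((hKxo x).preimage (continuous_mul_right x⁻¹)).mem_nhds (by
      simp only [Set.mem_preimage, mul_inv_cancel, SetLike.mem_coe]
      exact one_mem _))
  set K : Subgroup G := K₀ ⊓ ⨅ x ∈ t, Kx x with hKdef
  have hKset : (K : Set G) = ↑K₀ ∩ ⋂ x ∈ t, ↑(Kx x) := by
    simp [hKdef, Subgroup.coe_iInf]
  have hKcl : IsClosed (K : Set G) := by
    rw [hKset]
    exact hK₀c.isClosed.inter
      (isClosed_iInter fun x => isClosed_iInter fun _ => (hKxc x).isClosed)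
  have hKc : IsCompact (K : Set G) :=
    IsCompact.of_isClosed_subset hK₀c hKcl (by rw [hKset]; exact Set.inter_subset_left)
  have hKo : IsOpen (K : Set G) := by
    rw [hKset]
    exact hK₀o.inter (isOpen_biInter_finset fun x _ => hKxo x)
  have hmemKx : ∀ k ∈ K, ∀ x ∈ t, k ∈ Kx x := by
    intro k hk x hxt
    have : k ∈ (K : Set G) := hk
    rw [hKset] at this
    exact Set.mem_iInter₂.mp this.2 x hxt
  refine ⟨K, hKc, hKo, fun k hk g => ?_⟩
  by_cases hg : g ∈ ⋃ x ∈ t, (fun y : G => y * x⁻¹) ⁻¹' ↑(Kx x)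
  · obtain ⟨x, hxt, hgx⟩ := Set.mem_iUnion₂.mp hg
    have hgx' : g * x⁻¹ ∈ Kx x := hgx
    have e1 : F g = F x := by
      conv_lhs => rw [show g = g * x⁻¹ * x by rw [inv_mul_cancel_right]]
      exact hKxinv x _ hgx'
    have e2 : F (k * g) = F x := by
      have hmem : k * (g * x⁻¹) ∈ Kx x := mul_mem (hmemKx k hk x hxt) hgx'
      conv_lhs => rw [show k * g = k * (g * x⁻¹) * x by group]
      exact hKxinv x _ hmem
    rw [e1, e2]
  · have hg0 : F g = 0 := image_eq_zero_of_notMem_tsupport fun hc => hg (hcov hc)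
    have hkg0 : F (k * g) = 0 := by
      refine image_eq_zero_of_notMem_tsupport fun hc => hg ?_
      obtain ⟨x, hxt, hkgx⟩ := Set.mem_iUnion₂.mp (hcov hc)
      have hkgx' : k * g * x⁻¹ ∈ Kx x := hkgx
      refine Set.mem_iUnion₂.mpr ⟨x, hxt, ?_⟩
      have : k⁻¹ * (k * g * x⁻¹) ∈ Kx x :=
        mul_mem (inv_mem (hmemKx k hk x hxt)) hkgx'
      simpa [mul_assoc] using this
    rw [hg0, hkg0]

end GroupAux

/-- The averaging map `i(F)(g) = ∫_H π(h)(F(gh)) dh` is a surjective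
morphism of smooth `G`-modules from `C_c^∞(G, V)` (with `G` acting by left translation in
the variable) onto `ind_H^G V` (with `G` acting by left translation). -/
theorem indAvg_surjective_morphism
    (G : Type*) [Group G] [TopologicalSpace G] [IsTopologicalGroup G] [T2Space G]
    [LocallyCompactSpace G] [TotallyDisconnectedSpace G] [SigmaCompactSpace G]
    (hG : HasCompactOpenBasis G)
    (H : Subgroup G) (hHcl : IsClosed (H : Set G))
    [MeasurableSpace H] [BorelSpace H] (ν : Measure H) [ν.IsHaarMeasure]
    (V : Type*) [AddCommGroup V] [Module ℂ V]
    (ρ : Representation ℂ H V) (hρ : SmoothRep ρ) :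
    -- `i` maps `C_c^∞(G, V)` into `ind_H^G V`
    (∀ F ∈ SmCc G V, IsInd H ρ (indAvg ν ρ F)) ∧
    -- `i` is linear on `C_c^∞(G, V)`
    (∀ F F' : G → V, F ∈ SmCc G V → F' ∈ SmCc G V →
      indAvg ν ρ (F + F') = indAvg ν ρ F + indAvg ν ρ F') ∧
    (∀ (c : ℂ), ∀ F ∈ SmCc G V, indAvg ν ρ (c • F) = c • indAvg ν ρ F) ∧
    -- `i` is `G`-equivariant for the left translation actions
    (∀ (g₀ : G), ∀ F ∈ SmCc G V,
      indAvg ν ρ (fun g => F (g₀⁻¹ * g)) = fun g => indAvg ν ρ F (g₀⁻¹ * g)) ∧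
    -- `i` is surjective onto `ind_H^G V`
    (∀ φ : G → V, IsInd H ρ φ → ∃ F ∈ SmCc G V, indAvg ν ρ F = φ) := by
  classical
  -- properties of the integrand `h ↦ ρ h (F (g h))`
  have key : ∀ F : G → V, IsLocallyConstant F → HasCompactSupport F → ∀ g : G,
      (Set.range fun h : H => ρ h (F (g * ↑h))).Finite ∧
      (∀ v : V, MeasurableSet ((fun h : H => ρ h (F (g * ↑h))) ⁻¹' {v})) ∧
      (∀ v : V, v ≠ 0 → ν ((fun h : H => ρ h (F (g * ↑h))) ⁻¹' {v}) ≠ ⊤) :=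
    fun F hF1 hF2 g => lc_cs_props ν (integrand_lc hρ hF1 g) (integrand_cs hHcl hF2 g)
  refine ⟨?_, ?_, ?_, ?_, ?_⟩
  · -- (1) `i(F) ∈ ind_H^G V`
    rintro F ⟨hF1, hF2⟩
    obtain ⟨K, hKc, hKo, hKinv⟩ := exists_uniform_inv hG hF1 hF2
    refine ⟨⟨K, hKc, hKo, fun k hk g => ?_⟩, ⟨tsupport F, hF2, fun g hg => ?_⟩, fun g h₀ => ?_⟩
    · -- left invariance under `K`
      show smInt ν _ = smInt ν _
      congr 1
      funext h
      rw [mul_assoc, hKinv k hk (g * ↑h)]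
    · -- support compact mod `H`
      rw [Function.mem_support] at hg
      by_contra hmem
      apply hg
      have hall : ∀ h : H, F (g * ↑h) = 0 := by
        intro h
        by_contra hFh
        apply hmem
        refine Set.mem_mul.mpr ⟨g * ↑h, subset_tsupport F hFh, ↑h⁻¹, SetLike.coe_mem _, ?_⟩
        rw [Subgroup.coe_inv, mul_inv_cancel_right]
      have hzero : (fun h : H => ρ h (F (g * ↑h))) = fun _ : H => (0 : V) :=
        funext fun h => by rw [hall h, map_zero]
      show smInt ν _ = 0
      rw [hzero, smInt_zero_s11]
    · -- `H`-equivariance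
      obtain ⟨hr1, hr2, hr3⟩ := key F hF1 hF2 g
      have hint : (fun h : H => ρ h (F (g * ↑h₀ * ↑h)))
          = fun h : H => (ρ h₀⁻¹) ((fun h' : H => ρ h' (F (g * ↑h'))) (h₀ * h)) := by
        funext h
        simp only
        rw [← Module.End.mul_apply, ← map_mul, inv_mul_cancel_left, Subgroup.coe_mul,
          ← mul_assoc]
      show smInt ν _ = _
      rw [hint, smInt_map ν (fun h : H => (fun h' : H => ρ h' (F (g * ↑h'))) (h₀ * h))
          (hr1.subset (by rintro _ ⟨h, rfl⟩; exact ⟨h₀ * h, rfl⟩))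
          (fun v => measurable_const_mul h₀ (hr2 v))
          (fun v hv => by
            have hpre : (fun h : H => (fun h' : H => ρ h' (F (g * ↑h'))) (h₀ * h)) ⁻¹' {v}
                = (fun h : H => h₀ * h) ⁻¹' ((fun h' : H => ρ h' (F (g * ↑h'))) ⁻¹' {v}) := rfl
            rw [hpre, measure_preimage_mul]
            exact hr3 v hv)
          (ρ h₀⁻¹), smInt_translate_s11 ν h₀ (fun h' : H => ρ h' (F (g * ↑h')))]
      rfl
  · -- (2) additivity
    rintro F F' ⟨hF1, hF2⟩ ⟨hF'1, hF'2⟩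
    funext g
    obtain ⟨ha1, ha2, ha3⟩ := key F hF1 hF2 g
    obtain ⟨hb1, hb2, hb3⟩ := key F' hF'1 hF'2 g
    have hint : (fun h : H => ρ h ((F + F') (g * ↑h)))
        = fun h : H => ρ h (F (g * ↑h)) + ρ h (F' (g * ↑h)) :=
      funext fun h => by rw [Pi.add_apply, map_add]
    show smInt ν _ = _
    rw [hint, smInt_add_s11 ν _ _ ha1 ha2 ha3 hb1 hb2 hb3]
    rfl
  · -- (3) homogeneity
    rintro c F ⟨hF1, hF2⟩
    funext g
    obtain ⟨ha1, ha2, ha3⟩ := key F hF1 hF2 g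
    have hint : (fun h : H => ρ h ((c • F) (g * ↑h)))
        = fun h : H => (c • (LinearMap.id : V →ₗ[ℂ] V)) (ρ h (F (g * ↑h))) :=
      funext fun h => by
        rw [Pi.smul_apply, _root_.map_smul, LinearMap.smul_apply, LinearMap.id_apply]
    show smInt ν _ = _
    rw [hint, smInt_map ν _ ha1 ha2 ha3 (c • LinearMap.id)]
    simp only [LinearMap.smul_apply, LinearMap.id_apply]
    rfl
  · -- (4) `G`-equivariance
    rintro g₀ F -
    funext g
    show smInt ν _ = smInt ν _
    congr 1
    funext h
    rw [mul_assoc]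
  · -- (5) surjectivity
    rintro φ ⟨⟨K, hKc, hKo, hKinv⟩, ⟨C, hCc, hCsupp⟩, hequiv⟩
    -- cover `C` by finitely many left cosets of `K`
    obtain ⟨t, -, hcov⟩ := hCc.elim_nhds_subcover (fun x => (fun y : G => y * x⁻¹) ⁻¹' ↑K)
      (fun x _ => ((hKo).preimage (continuous_mul_right x⁻¹)).mem_nhds (by
        simp only [Set.mem_preimage, mul_inv_cancel, SetLike.mem_coe]
        exact one_mem _))
    set X : Set G := ⋃ x ∈ t, (fun y : G => y * x⁻¹) ⁻¹' ↑K with hXdef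
    have hXo : IsOpen X := isOpen_biUnion fun x _ => hKo.preimage (continuous_mul_right x⁻¹)
    have hXc : IsCompact X := by
      refine t.finite_toSet.isCompact_biUnion fun x _ => ?_
      have himg : (fun y : G => y * x⁻¹) ⁻¹' ↑K = (fun y : G => y * x) '' ↑K := by
        ext y
        constructor
        · intro hy
          exact ⟨y * x⁻¹, hy, by simp⟩
        · rintro ⟨z, hz, rfl⟩
          simpa [mul_assoc] using hz
      rw [himg]
      exact hKc.image (continuous_mul_right x)
    have hXmem : ∀ k ∈ K, ∀ y : G, k * y ∈ X ↔ y ∈ X := by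
      have haux : ∀ k ∈ K, ∀ y : G, y ∈ X → k * y ∈ X := by
        intro k hk y hy
        obtain ⟨x, hxt, hyx⟩ := Set.mem_iUnion₂.mp hy
        refine Set.mem_iUnion₂.mpr ⟨x, hxt, ?_⟩
        have : k * (y * x⁻¹) ∈ K := mul_mem hk hyx
        simpa [mul_assoc] using this
      intro k hk y
      constructor
      · intro hy
        have := haux k⁻¹ (inv_mem hk) _ hy
        simpa using this
      · exact haux k hk y
    have hCX : C ⊆ X := hcov
    -- the local volume function
    set A : G → Set H := fun g => (fun h : H => g * ↑h) ⁻¹' X with hAdef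
    have hAo : ∀ g, IsOpen (A g) :=
      fun g => hXo.preimage (continuous_const.mul continuous_subtype_val)
    have hAc : ∀ g, IsCompact (A g) := by
      intro g
      have heq : A g = (Subtype.val : H → G) ⁻¹' ((fun x : G => g * x) ⁻¹' X) := rfl
      rw [heq]
      exact hHcl.isClosedEmbedding_subtypeVal.isCompact_preimage
        ((Homeomorph.mulLeft g).isCompact_preimage.mpr hXc)
    have hAfin : ∀ g, ν (A g) ≠ ⊤ := fun g => (hAc g).measure_lt_top.ne
    set c : G → ℝ := fun g => (ν (A g)).toReal with hcdef
    have hcH : ∀ (g : G) (h₀ : H), c (g * ↑h₀) = c g := by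
      intro g h₀
      have heq : A (g * ↑h₀) = (fun h : H => h₀ * h) ⁻¹' (A g) := by
        ext h
        simp only [hAdef, Set.mem_preimage, mul_assoc, Subgroup.coe_mul]
      simp only [hcdef, heq, measure_preimage_mul]
    have hcK : ∀ k ∈ K, ∀ g : G, c (k * g) = c g := by
      intro k hk g
      have heq : A (k * g) = A g := by
        ext h
        simp only [hAdef, Set.mem_preimage, mul_assoc]
        exact hXmem k hk _
      simp only [hcdef, heq]
    have hφK : ∀ k ∈ K, ∀ g : G, φ (k * g) = φ g := hKinv
    -- positivity of `c` on the support of `φ`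
    have hcpos : ∀ g : G, φ g ≠ 0 → c g ≠ 0 := by
      intro g hgφ
      obtain ⟨x, hxC, y, hyH, hxy⟩ := Set.mem_mul.mp (hCsupp (Function.mem_support.mpr hgφ))
      have hAne : (A g).Nonempty := by
        refine ⟨(⟨y, hyH⟩ : H)⁻¹, ?_⟩
        show g * ↑(⟨y, hyH⟩ : H)⁻¹ ∈ X
        rw [Subgroup.coe_inv]
        have : g * y⁻¹ = x := by rw [← hxy, mul_inv_cancel_right]
        exact this ▸ hCX hxC
      simp only [hcdef]
      rw [ENNReal.toReal_ne_zero]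
      exact ⟨(hAo g).measure_ne_zero ν hAne, hAfin g⟩
    -- the preimage function
    set Fc : G → V := fun g => if g ∈ X then (((c g)⁻¹ : ℝ) : ℂ) • φ g else 0 with hFcdef
    have hFcK : ∀ k ∈ K, ∀ g : G, Fc (k * g) = Fc g := by
      intro k hk g
      simp only [hFcdef]
      by_cases hgX : g ∈ X
      · rw [if_pos ((hXmem k hk g).mpr hgX), if_pos hgX, hcK k hk g, hφK k hk g]
      · rw [if_neg (fun hc' => hgX ((hXmem k hk g).mp hc')), if_neg hgX]
    have hFc1 : IsLocallyConstant Fc := by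
      rw [IsLocallyConstant.iff_exists_open]
      intro g
      refine ⟨(fun y : G => y * g⁻¹) ⁻¹' ↑K, hKo.preimage (continuous_mul_right g⁻¹), by
        simp only [Set.mem_preimage, mul_inv_cancel, SetLike.mem_coe]
        exact one_mem _, ?_⟩
      intro y hy
      have hyk : y * g⁻¹ ∈ K := hy
      have hrw : y = (y * g⁻¹) * g := by rw [inv_mul_cancel_right]
      rw [hrw]
      exact hFcK _ hyk g
    have hFc2 : HasCompactSupport Fc := by
      refine HasCompactSupport.intro hXc fun g hg => ?_
      simp only [hFcdef]
      rw [if_neg hg]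
    have hφequiv : ∀ (g : G) (h : H), φ (g * ↑h) = ρ h⁻¹ (φ g) := hequiv
    refine ⟨Fc, ⟨hFc1, hFc2⟩, ?_⟩
    funext g
    have hint : (fun h : H => ρ h (Fc (g * ↑h)))
        = (A g).indicator fun _ => (((c g)⁻¹ : ℝ) : ℂ) • φ g := by
      funext h
      by_cases hh : g * ↑h ∈ X
      · rw [Set.indicator_of_mem (show h ∈ A g from hh)]
        simp only [hFcdef]
        rw [if_pos hh, hcH g h, hφequiv g h, _root_.map_smul, ← Module.End.mul_apply, ← map_mul,
          mul_inv_cancel, map_one, Module.End.one_apply]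
      · rw [Set.indicator_of_notMem (show h ∉ A g from hh)]
        simp only [hFcdef]
        rw [if_neg hh, map_zero]
    show smInt ν _ = φ g
    rw [hint, smInt_indicator]
    by_cases hgφ : φ g = 0
    · rw [hgφ]
      simp
    · have hc0 : ((c g : ℝ) : ℂ) ≠ 0 := Complex.ofReal_ne_zero.mpr (hcpos g hgφ)
      have : ((ν (A g)).toReal : ℂ) = ((c g : ℝ) : ℂ) := rfl
      rw [this, smul_smul, Complex.ofReal_inv, mul_inv_cancel₀ hc0, one_smul]
end
end
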